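/- arXiv:2406.14800 — 6 statements merged into one kernel-verified Lean document; each statement's English description precedes it below -/
import Mathlib

section
/- For two [m]-compositions c, c' of n, one has c ◁ c' in the refinement order if and only if Des(c) is a proper subset of Des(c') and g_c = g_{c'}. -/
/-- The word of an `[m]`-composition: read the columns left to right, each
column from top row to bottom row, recording each row index `i` with
multiplicity the entry `col i`.  Its `j`-th letter is `g_c(j)`. -/
def wordOf (m : ℕ) (c : List (Fin m → ℕ)) : List (Fin m) :=
  c.flatMap fun col => (List.finRange m).flatMap fun i => List.replicate (col i) i

/-- The subnorm (descent set) `Des(c) = {|c_1|, |c_1|+|c_2|, …, ∑_{i<k}|c_i|}`. -/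
def DesSet (m : ℕ) (c : List (Fin m → ℕ)) : Finset ℕ :=
  (Finset.Ioo 0 c.length).image fun i => ((c.take i).map fun col => ∑ a, col a).sum

/-- `SplitCol col c1 c2`: the column `col` is broken at some row `j` with
`col j = a' + a''` (not both zero) into `c1 = (col 1,…,col (j-1), a', 0,…,0)`
and `c2 = (0,…,0, a'', col (j+1),…, col m)`. -/
def SplitCol (m : ℕ) (col c1 c2 : Fin m → ℕ) : Prop :=
  ∃ (j : Fin m) (a' a'' : ℕ), col j = a' + a'' ∧ (a' ≠ 0 ∨ a'' ≠ 0) ∧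
    c1 j = a' ∧ c2 j = a'' ∧
    (∀ i, i < j → c1 i = col i ∧ c2 i = 0) ∧
    (∀ i, j < i → c1 i = 0 ∧ c2 i = col i)

/-- The covering relation `c < c'` on `[m]`-compositions: `c'` is obtained from
`c` by breaking one column into two consecutive (nonzero) columns. -/
def SplitRel (m : ℕ) (c c' : List (Fin m → ℕ)) : Prop :=
  ∃ (l r : List (Fin m → ℕ)) (col c1 c2 : Fin m → ℕ),
    SplitCol m col c1 c2 ∧ c1 ≠ 0 ∧ c2 ≠ 0 ∧
      c = l ++ col :: r ∧ c' = l ++ c1 :: c2 :: r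

/-!
A composition with nonzero columns is determined by its word and its descent set: the word of
each column is the weakly increasing block of the word between two consecutive descents.
Splitting a column keeps the word and adds exactly one descent. Conversely, cutting the weakly
increasing word of a column at any interior position is a split, so a descent of `c'` missing
from `c` can be added to `c` by one split; by induction on `#(Des c' \ Des c)` this ends at `c'`.
-/

section

variable {m : ℕ}

def colWord (m : ℕ) (col : Fin m → ℕ) : List (Fin m) :=
  (List.finRange m).flatMap fun i => List.replicate (col i) i

@[simp]
lemma wordOf_nil : wordOf m [] = [] := rfl

@[simp]
lemma wordOf_cons (col : Fin m → ℕ) (c : List (Fin m → ℕ)) :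
    wordOf m (col :: c) = colWord m col ++ wordOf m c := rfl

@[simp]
lemma wordOf_append (c d : List (Fin m → ℕ)) : wordOf m (c ++ d) = wordOf m c ++ wordOf m d :=
  List.flatMap_append

@[simp]
lemma count_colWord (col : Fin m → ℕ) (i : Fin m) : (colWord m col).count i = col i := by
  simp [colWord, List.count_flatMap, List.count_replicate, Function.comp_def, ← Fin.sum_univ_def]

@[simp]
lemma length_colWord (col : Fin m → ℕ) : (colWord m col).length = ∑ i, col i := by
  simp [colWord, List.length_flatMap, Fin.sum_univ_def]

lemma colWord_sorted (col : Fin m → ℕ) : (colWord m col).Pairwise (· ≤ ·) := by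
  refine List.pairwise_flatMap.2 ⟨fun i _ => List.pairwise_replicate.2 (Or.inr le_rfl), ?_⟩
  refine (List.pairwise_lt_finRange m).imp fun hij x hx y hy => ?_
  rw [List.eq_of_mem_replicate hx, List.eq_of_mem_replicate hy]
  exact hij.le

lemma colWord_injective : Function.Injective (colWord m) := fun col col' h => by
  funext i
  rw [← count_colWord col i, h, count_colWord]

lemma mem_colWord {col : Fin m → ℕ} {i : Fin m} : i ∈ colWord m col ↔ col i ≠ 0 := by
  rw [← List.count_pos_iff, count_colWord, Nat.pos_iff_ne_zero]

lemma colWord_eq_nil {col : Fin m → ℕ} : colWord m col = [] ↔ col = 0 := by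
  simp [List.eq_nil_iff_forall_not_mem, mem_colWord, funext_iff]

lemma eq_colWord_count_of_sorted {w : List (Fin m)} (hw : w.Pairwise (· ≤ ·)) :
    w = colWord m (w.count ·) :=
  List.Perm.eq_of_pairwise' hw (colWord_sorted _) (List.perm_iff_count.2 fun i => by simp)

lemma sum_count {α : Type*} [Fintype α] [DecidableEq α] (w : List α) :
    ∑ a, w.count a = w.length := by
  simpa using Multiset.sum_count_eq_card (s := Finset.univ) (m := (w : Multiset α)) (by simp)

lemma wordOf_eq_nil {c : List (Fin m → ℕ)} (hc : ∀ col ∈ c, col ≠ 0) :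
    wordOf m c = [] ↔ c = [] := by
  refine ⟨fun h => List.eq_nil_iff_forall_not_mem.2 fun col hcol => ?_, fun h => h ▸ rfl⟩
  exact hc col hcol (colWord_eq_nil.1 (List.flatMap_eq_nil_iff.1 h col hcol))

namespace SplitCol

variable {col c1 c2 : Fin m → ℕ}

lemma add_apply (h : SplitCol m col c1 c2) (i : Fin m) : c1 i + c2 i = col i := by
  obtain ⟨j, a', a'', hj, -, h1, h2, hlt, hgt⟩ := h
  rcases lt_trichotomy i j with hij | rfl | hij
  · obtain ⟨e1, e2⟩ := hlt i hij; omega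
  · omega
  · obtain ⟨e1, e2⟩ := hgt i hij; omega

lemma sum_eq (h : SplitCol m col c1 c2) : ∑ i, col i = ∑ i, c1 i + ∑ i, c2 i := by
  simp only [← h.add_apply, Finset.sum_add_distrib]

lemma colWord_append (h : SplitCol m col c1 c2) : colWord m c1 ++ colWord m c2 = colWord m col := by
  have hadd := h.add_apply
  obtain ⟨j, -, -, -, -, -, -, hlt, hgt⟩ := h
  have hs : (colWord m c1 ++ colWord m c2).Pairwise (· ≤ ·) := by
    refine List.pairwise_append.2 ⟨colWord_sorted c1, colWord_sorted c2, fun x hx y hy => ?_⟩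
    rw [mem_colWord] at hx hy
    exact (not_lt.1 fun hjx => hx (hgt x hjx).1).trans (not_lt.1 fun hyj => hy (hlt y hyj).2)
  rw [eq_colWord_count_of_sorted hs]
  congr 1
  funext i
  simp [hadd]

end SplitCol

lemma splitCol_count_append {u v : List (Fin m)} (hs : (u ++ v).Pairwise (· ≤ ·)) (hu : u ≠ []) :
    SplitCol m ((u ++ v).count ·) (u.count ·) (v.count ·) := by
  have hne : u.toFinset.Nonempty := by simpa [List.toFinset_nonempty_iff] using hu
  set j := u.toFinset.max' hne
  have hju : j ∈ u := List.mem_toFinset.1 (u.toFinset.max'_mem hne)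
  have hu_le : ∀ i ∈ u, i ≤ j := fun i hi => u.toFinset.le_max' i (List.mem_toFinset.2 hi)
  have hv_ge : ∀ i ∈ v, j ≤ i := (List.pairwise_append.1 hs).2.2 j hju
  refine ⟨j, u.count j, v.count j, List.count_append, Or.inl ?_, rfl, rfl, fun i hij => ?_,
    fun i hji => ?_⟩
  · exact (List.count_pos_iff.2 hju).ne'
  · have : i ∉ v := fun hi => not_le.2 hij (hv_ge i hi)
    simp [List.count_append, List.count_eq_zero.2 this]
  · have : i ∉ u := fun hi => not_le.2 hji (hu_le i hi)
    simp [List.count_append, List.count_eq_zero.2 this]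

lemma count_eq_zero_fun_iff {α : Type*} [DecidableEq α] {w : List α} :
    (w.count ·) = 0 ↔ w = [] := by
  simp [funext_iff, List.eq_nil_iff_forall_not_mem, List.count_eq_zero]

lemma exists_splitCol (col : Fin m → ℕ) {s : ℕ} (hs0 : 0 < s) (hs : s < ∑ i, col i) :
    ∃ c1 c2, SplitCol m col c1 c2 ∧ c1 ≠ 0 ∧ c2 ≠ 0 ∧ ∑ i, c1 i = s := by
  have hsplit := splitCol_count_append (u := (colWord m col).take s) (v := (colWord m col).drop s)
    (by rw [List.take_append_drop]; exact colWord_sorted col) (by simp [← List.length_pos_iff]; omega)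
  simp only [List.take_append_drop, count_colWord] at hsplit
  refine ⟨_, _, hsplit, ?_, ?_, ?_⟩
  · simp [count_eq_zero_fun_iff, ← List.length_pos_iff]; omega
  · simp [count_eq_zero_fun_iff]; omega
  · simp [sum_count]; omega

@[simp]
lemma desSet_nil : DesSet m [] = ∅ := rfl

@[simp]
lemma desSet_singleton (col : Fin m → ℕ) : DesSet m [col] = ∅ := rfl

lemma desSet_cons (col : Fin m → ℕ) {c : List (Fin m → ℕ)} (hc : c ≠ []) :
    DesSet m (col :: c) = insert (∑ i, col i) ((DesSet m c).image ((∑ i, col i) + ·)) := by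
  ext x
  simp only [DesSet, Finset.mem_image, Finset.mem_insert, Finset.mem_Ioo, List.length_cons]
  constructor
  · rintro ⟨_ | i, ⟨hi0, hi⟩, rfl⟩
    · omega
    · rcases i.eq_zero_or_pos with rfl | hi0
      · simp
      · exact Or.inr ⟨_, ⟨i, ⟨hi0, by omega⟩, rfl⟩, by simp⟩
  · rintro (rfl | ⟨_, ⟨i, ⟨hi0, hi⟩, rfl⟩, rfl⟩)
    · exact ⟨1, ⟨one_pos, by simpa [List.length_pos_iff]⟩, by simp⟩
    · exact ⟨i + 1, ⟨by omega, by omega⟩, by simp⟩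

lemma sum_pos_of_ne_zero {col : Fin m → ℕ} (h : col ≠ 0) : 0 < ∑ i, col i := by
  rwa [← length_colWord, List.length_pos_iff, Ne, colWord_eq_nil]

lemma desSet_subset_Ioo {c : List (Fin m → ℕ)} (hc : ∀ col ∈ c, col ≠ 0) :
    DesSet m c ⊆ Finset.Ioo 0 (wordOf m c).length := by
  induction c with
  | nil => simp
  | cons col c ih =>
    rcases eq_or_ne c [] with rfl | hne
    · simp
    have hcol := sum_pos_of_ne_zero (hc col List.mem_cons_self)
    have hc' := fun d hd => hc d (List.mem_cons_of_mem col hd)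
    have hlen : 0 < (wordOf m c).length := by rwa [List.length_pos_iff, Ne, wordOf_eq_nil hc']
    rw [desSet_cons col hne, Finset.insert_subset_iff, Finset.image_subset_iff]
    refine ⟨by simp; omega, fun x hx => ?_⟩
    have := Finset.mem_Ioo.1 (ih hc' hx)
    simp; omega

lemma isLeast_desSet_cons (col : Fin m → ℕ) (c : List (Fin m → ℕ)) :
    IsLeast (insert (wordOf m (col :: c)).length (DesSet m (col :: c)) : Finset ℕ)
      (∑ i, col i) := by
  rcases eq_or_ne c [] with rfl | hne
  · simp [isLeast_singleton]
  · rw [desSet_cons col hne]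
    refine ⟨by simp, fun x hx => ?_⟩
    simp at hx
    rcases hx with rfl | rfl | ⟨y, -, rfl⟩ <;> omega

lemma desSet_split_column {col c1 c2 : Fin m → ℕ}
    (hsum : ∑ i, col i = ∑ i, c1 i + ∑ i, c2 i) (h1 : 0 < ∑ i, c1 i) (h2 : 0 < ∑ i, c2 i)
    (l r : List (Fin m → ℕ)) :
    (wordOf m l).length + ∑ i, c1 i ∉ DesSet m (l ++ col :: r) ∧
      DesSet m (l ++ c1 :: c2 :: r) =
        insert ((wordOf m l).length + ∑ i, c1 i) (DesSet m (l ++ col :: r)) := by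
  induction l with
  | nil =>
    simp only [List.nil_append, wordOf_nil, List.length_nil, zero_add]
    refine ⟨fun hx => ?_, ?_⟩
    · have := (isLeast_desSet_cons col r).2 (Finset.mem_insert_of_mem hx)
      omega
    rcases eq_or_ne r [] with rfl | hr
    · simp [desSet_cons]
    · rw [desSet_cons _ (List.cons_ne_nil _ _), desSet_cons _ hr, desSet_cons _ hr,
        Finset.image_insert, Finset.image_image, hsum]
      simp only [Function.comp_def, add_assoc]
  | cons a l ih =>
    simp only [List.cons_append, wordOf_cons, List.length_append, length_colWord]
    rw [desSet_cons _ (by simp), desSet_cons _ (by simp), ih.2, Finset.image_insert,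
      Finset.insert_comm, add_assoc]
    refine ⟨?_, rfl⟩
    simp only [Finset.mem_insert, Finset.mem_image, not_or]
    refine ⟨by omega, fun ⟨y, hy, hxy⟩ => ih.1 ?_⟩
    rwa [← Nat.add_left_cancel hxy]

namespace SplitRel

variable {c c' : List (Fin m → ℕ)}

lemma wordOf_eq (h : SplitRel m c c') : wordOf m c' = wordOf m c := by
  obtain ⟨l, r, col, c1, c2, hsp, -, -, rfl, rfl⟩ := h
  simp [← hsp.colWord_append]

lemma desSet_ssubset (h : SplitRel m c c') : DesSet m c ⊂ DesSet m c' := by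
  obtain ⟨l, r, col, c1, c2, hsp, h1, h2, rfl, rfl⟩ := h
  obtain ⟨hx, hdes⟩ :=
    desSet_split_column hsp.sum_eq (sum_pos_of_ne_zero h1) (sum_pos_of_ne_zero h2) l r
  rw [hdes]
  exact Finset.ssubset_insert hx

lemma ne_zero (h : SplitRel m c c') (hc : ∀ col ∈ c, col ≠ 0) : ∀ col ∈ c', col ≠ 0 := by
  obtain ⟨l, r, col, c1, c2, -, h1, h2, rfl, rfl⟩ := h
  simp only [List.mem_append, List.mem_cons] at hc ⊢
  rintro d (hd | rfl | rfl | hd)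
  exacts [hc d (Or.inl hd), h1, h2, hc d (Or.inr (Or.inr hd))]

end SplitRel

lemma desSet_ssubset_and_wordOf_eq_of_transGen {c c' : List (Fin m → ℕ)}
    (h : Relation.TransGen (SplitRel m) c c') :
    DesSet m c ⊂ DesSet m c' ∧ wordOf m c = wordOf m c' := by
  induction h with
  | single h => exact ⟨h.desSet_ssubset, h.wordOf_eq.symm⟩
  | tail _ h ih => exact ⟨ih.1.trans h.desSet_ssubset, ih.2.trans h.wordOf_eq.symm⟩

lemma exists_column_of_not_mem_desSet {c : List (Fin m → ℕ)} {x : ℕ} (hx0 : 0 < x)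
    (hx : x < (wordOf m c).length) (hxc : x ∉ DesSet m c) :
    ∃ l col r, c = l ++ col :: r ∧ (wordOf m l).length < x ∧
      x < (wordOf m l).length + ∑ i, col i := by
  induction c generalizing x with
  | nil => simp at hx
  | cons a c ih =>
    simp only [wordOf_cons, List.length_append, length_colWord] at hx
    rcases lt_or_ge x (∑ i, a i) with hxa | hxa
    · exact ⟨[], a, c, rfl, hx0, by simpa⟩
    have hne : c ≠ [] := by rintro rfl; simp at hx; omega
    rw [desSet_cons a hne] at hxc
    have hxa' : x ≠ ∑ i, a i := fun h => hxc (h ▸ Finset.mem_insert_self _ _)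
    obtain ⟨l, col, r, rfl, hl, hr⟩ := ih (x := x - ∑ i, a i) (by omega) (by omega)
      fun h => hxc (Finset.mem_insert_of_mem (Finset.mem_image.2 ⟨_, h, by omega⟩))
    exact ⟨a :: l, col, r, rfl, by simp; omega, by simp; omega⟩

lemma exists_splitRel_desSet_eq_insert {c : List (Fin m → ℕ)} {x : ℕ} (hx0 : 0 < x)
    (hx : x < (wordOf m c).length) (hxc : x ∉ DesSet m c) :
    ∃ c', SplitRel m c c' ∧ DesSet m c' = insert x (DesSet m c) := by
  obtain ⟨l, col, r, rfl, hl, hr⟩ := exists_column_of_not_mem_desSet hx0 hx hxc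
  obtain ⟨c1, c2, hsp, h1, h2, hs⟩ :=
    exists_splitCol col (s := x - (wordOf m l).length) (by omega) (by omega)
  refine ⟨l ++ c1 :: c2 :: r, ⟨l, r, col, c1, c2, hsp, h1, h2, rfl, rfl⟩, ?_⟩
  rw [(desSet_split_column hsp.sum_eq (sum_pos_of_ne_zero h1) (sum_pos_of_ne_zero h2) l r).2, hs]
  congr 1
  omega

lemma erase_desSet_cons (col : Fin m → ℕ) {c : List (Fin m → ℕ)} (hc : ∀ d ∈ c, d ≠ 0)
    (hne : c ≠ []) :
    (DesSet m (col :: c)).erase (∑ i, col i) = (DesSet m c).image ((∑ i, col i) + ·) := by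
  rw [desSet_cons col hne, Finset.erase_insert]
  simp only [Finset.mem_image, not_exists, not_and]
  intro x hx
  have := Finset.mem_Ioo.1 (desSet_subset_Ioo hc hx)
  omega

lemma eq_of_wordOf_eq_of_desSet_eq {c c' : List (Fin m → ℕ)} (hc : ∀ col ∈ c, col ≠ 0)
    (hc' : ∀ col ∈ c', col ≠ 0) (hw : wordOf m c = wordOf m c')
    (hd : DesSet m c = DesSet m c') : c = c' := by
  induction c generalizing c' with
  | nil => exact ((wordOf_eq_nil hc').1 hw.symm).symm
  | cons a c ih =>
    obtain _ | ⟨a', c'⟩ := c'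
    · exact absurd ((wordOf_eq_nil hc).1 hw) (List.cons_ne_nil _ _)
    rw [List.forall_mem_cons] at hc hc'
    have hs : ∑ i, a i = ∑ i, a' i :=
      (isLeast_desSet_cons a c).unique (by rw [hw, hd]; exact isLeast_desSet_cons a' c')
    rw [wordOf_cons, wordOf_cons] at hw
    obtain ⟨ha, hwc⟩ := List.append_inj hw (by simp [hs])
    obtain rfl := colWord_injective ha
    refine congrArg _ (ih hc.2 hc'.2 hwc ?_)
    rcases eq_or_ne c [] with rfl | hne
    · rw [(wordOf_eq_nil hc'.2).1 hwc.symm]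
    have hne' : c' ≠ [] := by rwa [Ne, ← wordOf_eq_nil hc'.2, ← hwc, wordOf_eq_nil hc.2]
    apply Finset.image_injective (add_right_injective (∑ i, a i))
    rw [← erase_desSet_cons a hc.2 hne, ← erase_desSet_cons a hc'.2 hne', hd]

lemma reflTransGen_splitRel_of_desSet_subset {c c' : List (Fin m → ℕ)}
    (hc : ∀ col ∈ c, col ≠ 0) (hc' : ∀ col ∈ c', col ≠ 0) (hw : wordOf m c = wordOf m c')
    (hd : DesSet m c ⊆ DesSet m c') : Relation.ReflTransGen (SplitRel m) c c' := by
  induction hk : (DesSet m c' \ DesSet m c).card generalizing c with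
  | zero =>
    rw [Finset.card_eq_zero, Finset.sdiff_eq_empty_iff_subset] at hk
    rw [eq_of_wordOf_eq_of_desSet_eq hc hc' hw (hd.antisymm hk)]
  | succ k ih =>
    obtain ⟨x, hx⟩ : (DesSet m c' \ DesSet m c).Nonempty := Finset.card_pos.1 (by omega)
    rw [Finset.mem_sdiff] at hx
    have hxI := Finset.mem_Ioo.1 (desSet_subset_Ioo hc' hx.1)
    obtain ⟨c'', hrel, hdes⟩ := exists_splitRel_desSet_eq_insert hxI.1 (hw ▸ hxI.2) hx.2
    refine .head hrel (ih (hrel.ne_zero hc) (hrel.wordOf_eq.trans hw) ?_ ?_)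
    · exact hdes ▸ Finset.insert_subset hx.1 hd
    · rw [hdes, Finset.sdiff_insert, Finset.card_erase_of_mem (Finset.mem_sdiff.2 hx), hk]
      rfl

end

theorem stmt1_general {m : ℕ} (c c' : List (Fin m → ℕ))
    (hc : ∀ col ∈ c, col ≠ 0) (hc' : ∀ col ∈ c', col ≠ 0) :
    Relation.TransGen (SplitRel m) c c' ↔
      DesSet m c ⊂ DesSet m c' ∧ wordOf m c = wordOf m c' := by
  refine ⟨desSet_ssubset_and_wordOf_eq_of_transGen, fun ⟨hd, hw⟩ => ?_⟩
  obtain rfl | h := Relation.reflTransGen_iff_eq_or_transGen.1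
    (reflTransGen_splitRel_of_desSet_subset hc hc' hw hd.subset)
  · exact absurd hd (lt_irrefl _)
  · exact h

/-- for two `[m]`-compositions `c, c'` of `n`, one has `c ◁ c'`
(the transitive closure of the column-splitting relation) if and only if
`Des(c) ⊊ Des(c')` and `g_c = g_{c'}` (equivalently, the associated words
coincide). -/
theorem stmt1 {m : ℕ} (n : ℕ) (c c' : List (Fin m → ℕ))
    (hc : ∀ col ∈ c, col ≠ 0) (hc' : ∀ col ∈ c', col ≠ 0)
    (hn : (wordOf m c).length = n) (hn' : (wordOf m c').length = n) :
    Relation.TransGen (SplitRel m) c c' ↔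
      DesSet m c ⊂ DesSet m c' ∧ wordOf m c = wordOf m c' :=
  stmt1_general c c' hc hc'
end

section
/- Let A be a commutative k-algebra. The quasi-shuffle algebra QS(A) = (T(A), *, 1_k), equipped with the deconcatenation coproduct Δ(a_1⊗...⊗a_n) = sum_{i=0}^n (a_1⊗...⊗a_i) ⊗ (a_{i+1}⊗...⊗a_n) and counit ε(𝐚) = δ_{𝐚,1_k}, is a bialgebra; that is, Δ and ε are algebra morphisms for the quasi-shuffle product *. -/
/-!
`T(A)` is spanned by `1` and the elements `ι a * x`, so an identity between bilinear maps on
`T(A)` can be proved by a double induction: it suffices to check it when one argument is `1`,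
and on a pair `ι a * x`, `ι b * y` assuming it for the three pairs `(x, ι b * y)`,
`(ι a * x, y)`, `(x, y)` occurring in the quasi-shuffle recursion. On such pairs both sides of
`Δ (x * y) = Δ x * Δ y` are expanded by the recursions for `Δ` and `*`; the product on
`T(A) ⊗ T(A)` satisfies the quasi-shuffle recursion in its left factor, which matches the two
expansions term by term. For `ε` both sides vanish on such pairs.
-/

open scoped TensorProduct
open TensorProduct (map₂)

namespace TensorAlgebra

variable {R M : Type*} [CommSemiring R] [AddCommMonoid M] [Module R M]

theorem induction_ι_mul {P : TensorAlgebra R M → Prop} (one : P 1)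
    (ι_mul : ∀ m x, P x → P (ι R m * x)) (add : ∀ x y, P x → P y → P (x + y))
    (smul : ∀ (r : R) x, P x → P (r • x)) (x : TensorAlgebra R M) : P x := by
  let S : Submodule R (TensorAlgebra R M) :=
    { carrier := {x | P x}
      add_mem' := add _ _
      zero_mem' := by simpa using smul 0 1 one
      smul_mem' := smul }
  have mul_mem : ∀ x, ∀ y ∈ S, x * y ∈ S := by
    intro x
    induction x using TensorAlgebra.induction with
    | algebraMap r =>
      intro y hy
      rw [Algebra.algebraMap_eq_smul_one, smul_mul_assoc, one_mul]
      exact S.smul_mem r hy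
    | ι m => exact ι_mul m
    | mul x₁ x₂ h₁ h₂ =>
      intro y hy
      rw [mul_assoc]
      exact h₁ _ (h₂ y hy)
    | add x₁ x₂ h₁ h₂ =>
      intro y hy
      rw [add_mul]
      exact S.add_mem (h₁ y hy) (h₂ y hy)
  exact mul_one x ▸ mul_mem x 1 one

theorem linearMap_ext₂_ι_mul {N : Type*} [AddCommMonoid N] [Module R N]
    {f g : TensorAlgebra R M →ₗ[R] TensorAlgebra R M →ₗ[R] N}
    (one_left : ∀ y, f 1 y = g 1 y) (one_right : ∀ x, f x 1 = g x 1)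
    (ι_mul_ι_mul : ∀ a b x y, f x (ι R b * y) = g x (ι R b * y) →
      f (ι R a * x) y = g (ι R a * x) y → f x y = g x y →
      f (ι R a * x) (ι R b * y) = g (ι R a * x) (ι R b * y)) :
    f = g := by
  ext1 x
  induction x using induction_ι_mul with
  | one => exact LinearMap.ext one_left
  | ι_mul a x hx =>
    ext1 y
    induction y using induction_ι_mul with
    | one => exact one_right _
    | ι_mul b y hy => exact ι_mul_ι_mul a b x y (by rw [hx]) hy (by rw [hx])
    | add y₁ y₂ h₁ h₂ => rw [map_add, map_add, h₁, h₂]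
    | smul r y h => rw [map_smul, map_smul, h]
  | add x₁ x₂ h₁ h₂ => rw [map_add, map_add, h₁, h₂]
  | smul r x h => rw [map_smul, map_smul, h]

end TensorAlgebra

section QuasiShuffle

variable {k A : Type*} [CommSemiring k] [Semiring A] [Algebra k A]
  (μ : TensorAlgebra k A →ₗ[k] TensorAlgebra k A →ₗ[k] TensorAlgebra k A)

def QuasiShuffleRecursion : Prop :=
  ∀ (a b : A) (x y : TensorAlgebra k A),
    μ (TensorAlgebra.ι k a * x) (TensorAlgebra.ι k b * y) =
      TensorAlgebra.ι k a * μ x (TensorAlgebra.ι k b * y) +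
        TensorAlgebra.ι k b * μ (TensorAlgebra.ι k a * x) y +
        TensorAlgebra.ι k (a * b) * μ x y

theorem map₂_one_tmul_one_left (hleft : ∀ x, μ 1 x = x)
    (z : TensorAlgebra k A ⊗[k] TensorAlgebra k A) : map₂ μ μ (1 ⊗ₜ 1) z = z := by
  induction z using TensorProduct.induction_on with
  | zero => simp
  | tmul u v => simp [hleft]
  | add u v hu hv => rw [map_add, hu, hv]

theorem map₂_one_tmul_one_right (hright : ∀ x, μ x 1 = x)
    (z : TensorAlgebra k A ⊗[k] TensorAlgebra k A) : map₂ μ μ z (1 ⊗ₜ 1) = z := by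
  induction z using TensorProduct.induction_on with
  | zero => simp
  | tmul u v => simp [hright]
  | add u v hu hv => rw [map_add, LinearMap.add_apply, hu, hv]

theorem map₂_one_tmul_one_tmul (hleft : ∀ x, μ 1 x = x) (x y : TensorAlgebra k A) :
    map₂ μ μ (1 ⊗ₜ x) (1 ⊗ₜ y) = 1 ⊗ₜ μ x y := by
  simp [hleft]

theorem map₂_tmul_one_mul_one_tmul (hright : ∀ x, μ x 1 = x) (c y : TensorAlgebra k A)
    (u : TensorAlgebra k A ⊗[k] TensorAlgebra k A) :
    map₂ μ μ ((c ⊗ₜ 1) * u) (1 ⊗ₜ y) = (c ⊗ₜ 1) * map₂ μ μ u (1 ⊗ₜ y) := by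
  induction u using TensorProduct.induction_on with
  | zero => simp
  | tmul p q => simp [hright]
  | add u₁ u₂ h₁ h₂ => simp only [mul_add, map_add, LinearMap.add_apply, h₁, h₂]

theorem map₂_one_tmul_tmul_one_mul (hleft : ∀ x, μ 1 x = x) (c x : TensorAlgebra k A)
    (v : TensorAlgebra k A ⊗[k] TensorAlgebra k A) :
    map₂ μ μ (1 ⊗ₜ x) ((c ⊗ₜ 1) * v) = (c ⊗ₜ 1) * map₂ μ μ (1 ⊗ₜ x) v := by
  induction v using TensorProduct.induction_on with
  | zero => simp
  | tmul r s => simp [hleft]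
  | add v₁ v₂ h₁ h₂ => simp only [mul_add, map_add, h₁, h₂]

theorem map₂_ι_tmul_one_mul_ι_tmul_one_mul (hrec : QuasiShuffleRecursion μ) (a b : A)
    (u v : TensorAlgebra k A ⊗[k] TensorAlgebra k A) :
    map₂ μ μ ((TensorAlgebra.ι k a ⊗ₜ 1) * u) ((TensorAlgebra.ι k b ⊗ₜ 1) * v) =
      (TensorAlgebra.ι k a ⊗ₜ 1) * map₂ μ μ u ((TensorAlgebra.ι k b ⊗ₜ 1) * v) +
        (TensorAlgebra.ι k b ⊗ₜ 1) * map₂ μ μ ((TensorAlgebra.ι k a ⊗ₜ 1) * u) v +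
        (TensorAlgebra.ι k (a * b) ⊗ₜ 1) * map₂ μ μ u v := by
  induction u using TensorProduct.induction_on with
  | zero => simp
  | add u₁ u₂ h₁ h₂ =>
    simp only [mul_add, map_add, LinearMap.add_apply, h₁, h₂]
    abel
  | tmul p q =>
    induction v using TensorProduct.induction_on with
    | zero => simp
    | add v₁ v₂ h₁ h₂ =>
      simp only [mul_add, map_add, h₁, h₂]
      abel
    | tmul r s =>
      simp only [Algebra.TensorProduct.tmul_mul_tmul, one_mul, TensorProduct.map₂_apply_tmul,
        TensorProduct.map_tmul, hrec _ _ _ _, TensorProduct.add_tmul]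

variable {μ}

theorem deconcatenation_quasiShuffle (hleft : ∀ x, μ 1 x = x) (hright : ∀ x, μ x 1 = x)
    (hrec : QuasiShuffleRecursion μ)
    {Δ : TensorAlgebra k A →ₗ[k] TensorAlgebra k A ⊗[k] TensorAlgebra k A}
    (hΔone : Δ 1 = 1 ⊗ₜ 1)
    (hΔrec : ∀ (a : A) (x : TensorAlgebra k A),
      Δ (TensorAlgebra.ι k a * x) = (TensorAlgebra.ι k a ⊗ₜ 1) * Δ x + 1 ⊗ₜ (TensorAlgebra.ι k a * x))
    (x y : TensorAlgebra k A) :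
    Δ (μ x y) = map₂ μ μ (Δ x) (Δ y) := by
  suffices μ.compr₂ Δ = (map₂ μ μ).compl₁₂ Δ Δ from LinearMap.congr_fun₂ this x y
  refine TensorAlgebra.linearMap_ext₂_ι_mul (fun y => ?_) (fun x => ?_) fun a b x y h₁ h₂ h₃ => ?_
  · simp only [LinearMap.compr₂_apply, LinearMap.compl₁₂_apply]
    rw [hleft, hΔone, map₂_one_tmul_one_left μ hleft]
  · simp only [LinearMap.compr₂_apply, LinearMap.compl₁₂_apply]
    rw [hright, hΔone, map₂_one_tmul_one_right μ hright]
  · simp only [LinearMap.compr₂_apply, LinearMap.compl₁₂_apply] at h₁ h₂ h₃ ⊢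
    simp only [hrec a b, map_add, LinearMap.add_apply, hΔrec, h₁, h₂, h₃,
      map₂_ι_tmul_one_mul_ι_tmul_one_mul μ hrec, map₂_tmul_one_mul_one_tmul μ hright,
      map₂_one_tmul_tmul_one_mul μ hleft, map₂_one_tmul_one_tmul μ hleft, mul_add,
      TensorProduct.tmul_add]
    abel

theorem counit_quasiShuffle (hleft : ∀ x, μ 1 x = x) (hright : ∀ x, μ x 1 = x)
    (hrec : QuasiShuffleRecursion μ)
    {ε : TensorAlgebra k A →ₗ[k] k} (hεone : ε 1 = 1)
    (hεrec : ∀ (a : A) (x : TensorAlgebra k A), ε (TensorAlgebra.ι k a * x) = 0)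
    (x y : TensorAlgebra k A) :
    ε (μ x y) = ε x * ε y := by
  suffices μ.compr₂ ε = (LinearMap.mul k k).compl₁₂ ε ε from LinearMap.congr_fun₂ this x y
  refine TensorAlgebra.linearMap_ext₂_ι_mul (fun y => ?_) (fun x => ?_) fun a b x y _ _ _ => ?_
  · simp [hleft, hεone]
  · simp [hright, hεone]
  · simp [hrec a b, hεrec]

end QuasiShuffle

theorem stmt7_general {k A : Type*} [CommRing k] [CommRing A] [Algebra k A]
    (mqs : TensorAlgebra k A →ₗ[k] TensorAlgebra k A →ₗ[k] TensorAlgebra k A)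
    (hleft : ∀ x : TensorAlgebra k A, mqs 1 x = x)
    (hright : ∀ x : TensorAlgebra k A, mqs x 1 = x)
    (hrec : ∀ (a b : A) (x y : TensorAlgebra k A),
      mqs (TensorAlgebra.ι k a * x) (TensorAlgebra.ι k b * y) =
        TensorAlgebra.ι k a * mqs x (TensorAlgebra.ι k b * y) +
          TensorAlgebra.ι k b * mqs (TensorAlgebra.ι k a * x) y +
          TensorAlgebra.ι k (a * b) * mqs x y)
    -- the deconcatenation coproduct
    (Δ : TensorAlgebra k A →ₗ[k] TensorAlgebra k A ⊗[k] TensorAlgebra k A)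
    (hΔone : Δ 1 = 1 ⊗ₜ 1)
    (hΔrec : ∀ (a : A) (x : TensorAlgebra k A),
      Δ (TensorAlgebra.ι k a * x) =
        (TensorAlgebra.ι k a ⊗ₜ (1 : TensorAlgebra k A)) * Δ x +
          (1 : TensorAlgebra k A) ⊗ₜ (TensorAlgebra.ι k a * x))
    -- the counit
    (ε : TensorAlgebra k A →ₗ[k] k)
    (hεone : ε 1 = 1)
    (hεrec : ∀ (a : A) (x : TensorAlgebra k A), ε (TensorAlgebra.ι k a * x) = 0) :
    (∀ x y : TensorAlgebra k A,
        Δ (mqs x y) = TensorProduct.map₂ mqs mqs (Δ x) (Δ y)) ∧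
      (∀ x y : TensorAlgebra k A, ε (mqs x y) = ε x * ε y) :=
  ⟨deconcatenation_quasiShuffle hleft hright hrec hΔone hΔrec,
    counit_quasiShuffle hleft hright hrec hεone hεrec⟩

/-- for a commutative `k`-algebra `A`, the quasi-shuffle algebra
`QS(A) = (T(A), *, 1)` (realized on the underlying module of the tensor
algebra, with quasi-shuffle product `mqs`), equipped with the deconcatenation
coproduct `Δ` and the counit `ε`, is a bialgebra: `Δ` and `ε` are algebra
morphisms for `*` (the product on `T(A) ⊗ T(A)` being the one induced by `mqs`
componentwise, i.e. `TensorProduct.map₂ mqs mqs`). -/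
theorem stmt7 {k A : Type*} [CommRing k] [CommRing A] [Algebra k A] [Algebra ℚ k]
    (mqs : TensorAlgebra k A →ₗ[k] TensorAlgebra k A →ₗ[k] TensorAlgebra k A)
    (hleft : ∀ x : TensorAlgebra k A, mqs 1 x = x)
    (hright : ∀ x : TensorAlgebra k A, mqs x 1 = x)
    (hrec : ∀ (a b : A) (x y : TensorAlgebra k A),
      mqs (TensorAlgebra.ι k a * x) (TensorAlgebra.ι k b * y) =
        TensorAlgebra.ι k a * mqs x (TensorAlgebra.ι k b * y) +
          TensorAlgebra.ι k b * mqs (TensorAlgebra.ι k a * x) y +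
          TensorAlgebra.ι k (a * b) * mqs x y)
    -- the deconcatenation coproduct
    (Δ : TensorAlgebra k A →ₗ[k] TensorAlgebra k A ⊗[k] TensorAlgebra k A)
    (hΔone : Δ 1 = 1 ⊗ₜ 1)
    (hΔrec : ∀ (a : A) (x : TensorAlgebra k A),
      Δ (TensorAlgebra.ι k a * x) =
        (TensorAlgebra.ι k a ⊗ₜ (1 : TensorAlgebra k A)) * Δ x +
          (1 : TensorAlgebra k A) ⊗ₜ (TensorAlgebra.ι k a * x))
    -- the counit
    (ε : TensorAlgebra k A →ₗ[k] k)
    (hεone : ε 1 = 1)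
    (hεrec : ∀ (a : A) (x : TensorAlgebra k A), ε (TensorAlgebra.ι k a * x) = 0) :
    (∀ x y : TensorAlgebra k A,
        Δ (mqs x y) = TensorProduct.map₂ mqs mqs (Δ x) (Δ y)) ∧
      (∀ x y : TensorAlgebra k A, ε (mqs x y) = ε x * ε y) :=
  stmt7_general mqs hleft hright hrec Δ hΔone hΔrec ε hεone hεrec
end

section
/- The bialgebra (QS(A), *, 1_k, Δ, ε) is a Hopf algebra, with antipode S given on a pure tensor 𝐚 = a_1⊗...⊗a_n by S(𝐚) = (−1)^n · sum over compositions L = (l_1,...,l_r) of n of L ∘ 𝐚^r, where 𝐚^r = a_n⊗...⊗a_1 is the reversal and L ∘ 𝐛 is obtained from 𝐛 = b_1⊗...⊗b_n by multiplying together (in A) the consecutive blocks of sizes l_1,...,l_r. -/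
open scoped TensorProduct

noncomputable def pureTensor (k : Type*) {A : Type*} [CommRing k] [CommRing A]
    [Algebra k A] (b : List A) : TensorAlgebra k A :=
  (b.map fun a => TensorAlgebra.ι k a).prod

def Comps (n : ℕ) : Set (List ℕ) := {L | (∀ l ∈ L, 0 < l) ∧ L.sum = n}

def blocksMul {A : Type*} [CommRing A] : List ℕ → List A → List A
  | [], _ => []
  | l :: L, b => (b.take l).prod :: blocksMul L (b.drop l)

def comps : ℕ → Finset (List ℕ)
  | 0 => {[]}
  | (n+1) =>
    (Finset.range (n+1)).attach.biUnion fun j =>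
      (comps j.1).image fun L => (n+1 - j.1) :: L
decreasing_by exact Finset.mem_range.mp j.2

lemma comps_zero : comps 0 = {[]} := by rw [comps]

lemma mem_comps : ∀ n L, L ∈ comps n ↔ (∀ l ∈ L, 0 < l) ∧ L.sum = n := by
  intro n
  induction n using Nat.strong_induction_on with
  | _ n ih =>
    intro L
    match n with
    | 0 =>
      rw [comps]
      constructor
      · rintro h
        simp only [Finset.mem_singleton] at h
        subst h; simp
      · rintro ⟨h1, h2⟩
        match L with
        | [] => simp
        | l :: L' =>
          exfalso
          have := h1 l (by simp)
          simp at h2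
          omega
    | n + 1 =>
      rw [comps]
      simp only [Finset.mem_biUnion, Finset.mem_attach, Finset.mem_image, true_and,
        Subtype.exists, Finset.mem_range]
      constructor
      · rintro ⟨j, hj, M, hM, rfl⟩
        rw [ih j hj] at hM
        refine ⟨?_, ?_⟩
        · intro l hl
          rcases List.mem_cons.mp hl with rfl | hl
          · omega
          · exact hM.1 l hl
        · simp [hM.2]; omega
      · rintro ⟨h1, h2⟩
        match L with
        | [] => simp at h2
        | l :: M =>
          have hl : 0 < l := h1 l (by simp)
          simp only [List.sum_cons] at h2
          refine ⟨M.sum, by omega, M, ?_, ?_⟩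
          · rw [ih M.sum (by omega)]
            exact ⟨fun x hx => h1 x (by simp [hx]), rfl⟩
          · congr 1; omega

lemma Comps_eq_coe (n : ℕ) : Comps n = ↑(comps n) := by
  ext L; rw [Finset.mem_coe, mem_comps]; rfl

lemma sum_comps_succ {M : Type*} [AddCommMonoid M] (n : ℕ) (f : List ℕ → M) :
    ∑ L ∈ comps (n+1), f L
      = ∑ j ∈ Finset.range (n+1), ∑ L ∈ comps j, f ((n+1-j) :: L) := by
  rw [comps]
  rw [Finset.sum_biUnion]
  · rw [← Finset.sum_attach (Finset.range (n+1))
      (fun j => ∑ L ∈ comps j, f ((n+1-j) :: L))]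
    refine Finset.sum_congr rfl fun j _ => ?_
    rw [Finset.sum_image]
    intro x _ y _ h
    exact List.tail_eq_of_cons_eq h
  · intro x _ y _ hxy
    simp only [Finset.disjoint_left, Finset.mem_image]
    rintro L ⟨M, hM, rfl⟩ ⟨M', hM', hEq⟩
    have hx := Finset.mem_range.mp x.2
    have hy := Finset.mem_range.mp y.2
    have : n + 1 - x.1 = n + 1 - y.1 := List.head_eq_of_cons_eq hEq.symm
    exact hxy (Subtype.ext (by omega))
section aux
variable {k A : Type*} [CommRing k] [CommRing A] [Algebra k A]

local notation "P" => pureTensor k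
local notation "ιt" => TensorAlgebra.ι k

lemma P_nil : P ([] : List A) = 1 := rfl

lemma P_cons (a : A) (b : List A) : P (a :: b) = ιt a * P b := by
  simp [pureTensor]

lemma P_append (u v : List A) : P (u ++ v) = P u * P v := by
  simp [pureTensor]

lemma P_singleton (a : A) : P [a] = ιt a := by simp [pureTensor]

lemma span_P_top : Submodule.span k (Set.range (P : List A → TensorAlgebra k A)) = ⊤ := by
  rw [eq_top_iff]
  rintro x -
  induction x using TensorAlgebra.induction with
  | algebraMap r =>
    rw [Algebra.algebraMap_eq_smul_one]
    exact Submodule.smul_mem _ _ (Submodule.subset_span ⟨[], rfl⟩)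
  | ι a => exact Submodule.subset_span ⟨[a], P_singleton a⟩
  | add a b ha hb => exact Submodule.add_mem _ ha hb
  | mul a b ha hb =>
    refine Submodule.span_induction (p := fun a _ =>
        a * b ∈ Submodule.span k (Set.range (P : List A → TensorAlgebra k A)))
      ?_ ?_ ?_ ?_ ha
    · rintro x ⟨u, rfl⟩
      refine Submodule.span_induction (p := fun b _ =>
          P u * b ∈ Submodule.span k (Set.range (P : List A → TensorAlgebra k A)))
        ?_ ?_ ?_ ?_ hb
      · rintro y ⟨v, rfl⟩
        exact Submodule.subset_span ⟨u ++ v, P_append u v⟩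
      · simp
      · intro y z _ _ h1 h2
        rw [mul_add]; exact Submodule.add_mem _ h1 h2
      · intro c y _ h1
        rw [mul_smul_comm]; exact Submodule.smul_mem _ _ h1
    · simp
    · intro y z _ _ h1 h2
      rw [add_mul]; exact Submodule.add_mem _ h1 h2
    · intro c y _ h1
      rw [smul_mul_assoc]; exact Submodule.smul_mem _ _ h1


noncomputable def Ublocks (d : List A) : TensorAlgebra k A :=
  ∑ L ∈ comps d.length, P (blocksMul L d)

lemma U_nil : Ublocks (k := k) ([] : List A) = 1 := by
  simp [Ublocks, comps_zero, blocksMul, P_nil]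

lemma U_cons (x : A) (d : List A) :
    Ublocks (k := k) (x :: d) =
      ∑ j ∈ Finset.range (d.length + 1),
        ιt (x * (d.take j).prod) * Ublocks (k := k) (d.drop j) := by
  rw [Ublocks]
  simp only [List.length_cons]
  rw [sum_comps_succ]
  rw [← Finset.sum_range_reflect]
  refine Finset.sum_congr rfl fun j hj => ?_
  have hj' : j ≤ d.length := Nat.lt_succ_iff.mp (Finset.mem_range.mp hj)
  have h1 : d.length + 1 - 1 - j = d.length - j := by omega
  have h2 : d.length + 1 - (d.length - j) = j + 1 := by omega
  rw [h1, h2, Ublocks, Finset.mul_sum, List.length_drop]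
  refine Finset.sum_congr rfl fun L hL => ?_
  have : blocksMul ((j+1) :: L) (x :: d) = (x * (d.take j).prod) :: blocksMul L (d.drop j) := by
    simp [blocksMul, List.take_succ_cons, List.drop_succ_cons, List.prod_cons]
  rw [this, P_cons]

/-! ### the reversal antiautomorphism -/

noncomputable def revMap : TensorAlgebra k A →ₗ[k] TensorAlgebra k A :=
  ((MulOpposite.opLinearEquiv k).symm.toLinearMap).comp
    (TensorAlgebra.lift k
      ((MulOpposite.opLinearEquiv k (M := TensorAlgebra k A)).toLinearMap ∘ₗ
        TensorAlgebra.ι k)).toLinearMap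

lemma revMap_one : revMap (1 : TensorAlgebra k A) = 1 := by
  simp [revMap]

lemma revMap_ι_mul (a : A) (x : TensorAlgebra k A) :
    revMap (ιt a * x) = revMap x * ιt a := by
  simp only [revMap, LinearMap.coe_comp, Function.comp_apply, AlgHom.toLinearMap_apply,
    map_mul, LinearEquiv.coe_coe]
  rw [TensorAlgebra.lift_ι_apply]
  simp

lemma revMap_P (b : List A) : revMap (P b) = P b.reverse := by
  induction b with
  | nil => simpa [P_nil] using revMap_one (k := k) (A := A)
  | cons a b ih =>
    rw [P_cons, revMap_ι_mul, ih, List.reverse_cons, P_append, P_singleton]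

/-! ### mqs lemmas -/

variable (mqs : TensorAlgebra k A →ₗ[k] TensorAlgebra k A →ₗ[k] TensorAlgebra k A)

section mqslemmas
variable (hleft : ∀ x : TensorAlgebra k A, mqs 1 x = x)
    (hright : ∀ x : TensorAlgebra k A, mqs x 1 = x)
    (hrec : ∀ (a b : A) (x y : TensorAlgebra k A),
      mqs (TensorAlgebra.ι k a * x) (TensorAlgebra.ι k b * y) =
        TensorAlgebra.ι k a * mqs x (TensorAlgebra.ι k b * y) +
          TensorAlgebra.ι k b * mqs (TensorAlgebra.ι k a * x) y +
          TensorAlgebra.ι k (a * b) * mqs x y)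

include hleft hright hrec in
lemma mqs_recR_pure : ∀ (N : ℕ) (u v : List A), u.length + v.length ≤ N →
    ∀ a b : A, mqs (P u * ιt a) (P v * ιt b) =
      mqs (P u) (P v * ιt b) * ιt a + mqs (P u * ιt a) (P v) * ιt b +
        mqs (P u) (P v) * ιt (a * b) := by
  intro N
  induction N with
  | zero =>
    rintro u v h a b
    match u, v with
    | [], [] =>
      simp only [P_nil, one_mul, hleft, hright]
      have h1 := hrec a b 1 1
      simp only [mul_one, hleft, hright] at h1
      rw [h1]; abel
    | c :: u', v => simp at h
    | u, c :: v' => simp at h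
  | succ N ih =>
    rintro u v h a b
    match u, v with
    | [], [] =>
      simp only [P_nil, one_mul, hleft, hright]
      have h1 := hrec a b 1 1
      simp only [mul_one, hleft, hright] at h1
      rw [h1]; abel
    | [], e :: v' =>
      simp only [P_nil, P_cons, one_mul, mul_assoc, hleft]
      have h1 : mqs (ιt a) (ιt e * (P v' * ιt b)) =
          ιt a * (ιt e * (P v' * ιt b)) + ιt e * mqs (ιt a) (P v' * ιt b) +
            ιt (a * e) * (P v' * ιt b) := by
        have := hrec a e 1 (P v' * ιt b)
        simpa only [mul_one, hleft] using this
      have h2 : mqs (ιt a) (ιt e * P v') =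
          ιt a * (ιt e * P v') + ιt e * mqs (ιt a) (P v') +
            ιt (a * e) * P v' := by
        have := hrec a e 1 (P v')
        simpa only [mul_one, hleft] using this
      have IH := ih [] v' (by simp at h ⊢; omega) a b
      simp only [P_nil, one_mul, hleft, hright] at IH
      rw [h1, h2, IH]
      noncomm_ring
    | c :: u', [] =>
      simp only [P_nil, P_cons, one_mul, mul_one, mul_assoc, hright]
      have h1 : mqs (ιt c * (P u' * ιt a)) (ιt b) =
          ιt c * mqs (P u' * ιt a) (ιt b) + ιt b * (ιt c * (P u' * ιt a)) +
            ιt (c * b) * (P u' * ιt a) := by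
        have := hrec c b (P u' * ιt a) 1
        simpa only [mul_one, hright] using this
      have h2 : mqs (ιt c * P u') (ιt b) =
          ιt c * mqs (P u') (ιt b) + ιt b * (ιt c * P u') +
            ιt (c * b) * P u' := by
        have := hrec c b (P u') 1
        simpa only [mul_one, hright] using this
      have IH := ih u' [] (by simp at h ⊢; omega) a b
      simp only [P_nil, one_mul, mul_one, hleft, hright] at IH
      rw [h1, h2, IH]
      noncomm_ring
    | c :: u', e :: v' =>
      simp only [P_cons, mul_assoc]
      rw [hrec c e (P u' * ιt a) (P v' * ιt b)]
      have IH1 := ih u' (e :: v') (by simp at h ⊢; omega) a b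
      have IH2 := ih (c :: u') v' (by simp at h ⊢; omega) a b
      have IH3 := ih u' v' (by simp at h ⊢; omega) a b
      simp only [P_cons, mul_assoc] at IH1 IH2 IH3
      rw [IH1, IH2, IH3]
      rw [hrec c e (P u') (P v' * ιt b), hrec c e (P u' * ιt a) (P v'),
        hrec c e (P u') (P v')]
      noncomm_ring

include hleft hright hrec in
lemma mqs_recR : ∀ (a b : A) (x y : TensorAlgebra k A),
    mqs (x * ιt a) (y * ιt b) =
      mqs x (y * ιt b) * ιt a + mqs (x * ιt a) y * ιt b + mqs x y * ιt (a * b) := by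
  intro a b
  have hbil : ((mqs.comp (LinearMap.mulRight k (ιt a))).compl₂ (LinearMap.mulRight k (ιt b)))
      = (mqs.compl₂ (LinearMap.mulRight k (ιt b))).compr₂ (LinearMap.mulRight k (ιt a))
        + ((mqs.comp (LinearMap.mulRight k (ιt a))).compr₂ (LinearMap.mulRight k (ιt b)))
        + mqs.compr₂ (LinearMap.mulRight k (ιt (a * b))) := by
    apply LinearMap.ext_on span_P_top
    rintro x ⟨u, rfl⟩
    apply LinearMap.ext_on span_P_top
    rintro y ⟨v, rfl⟩
    simp only [LinearMap.compl₂_apply, LinearMap.compr₂_apply, LinearMap.comp_apply,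
      LinearMap.add_apply, LinearMap.mulRight_apply]
    exact mqs_recR_pure mqs hleft hright hrec (u.length + v.length) u v le_rfl a b
  intro x y
  have h := DFunLike.congr_fun (DFunLike.congr_fun hbil x) y
  simpa only [LinearMap.compl₂_apply, LinearMap.compr₂_apply, LinearMap.comp_apply,
    LinearMap.add_apply, LinearMap.mulRight_apply] using h

include hleft hright hrec in
lemma mqs_comm_pure : ∀ (N : ℕ) (u v : List A), u.length + v.length ≤ N →
    mqs (P u) (P v) = mqs (P v) (P u) := by
  intro N
  induction N with
  | zero =>
    rintro u v h
    match u, v with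
    | [], [] => rfl
    | c :: u', v => simp at h
    | u, c :: v' => simp at h
  | succ N ih =>
    rintro u v h
    match u, v with
    | [], v => simp only [P_nil, hleft, hright]
    | c :: u', [] => simp only [P_nil, hleft, hright]
    | c :: u', e :: v' =>
      have IH1 := ih u' (e :: v') (by simp at h ⊢; omega)
      have IH2 := ih (c :: u') v' (by simp at h ⊢; omega)
      have IH3 := ih u' v' (by simp at h ⊢; omega)
      simp only [P_cons] at IH1 IH2 ⊢
      rw [hrec c e (P u') (P v'), hrec e c (P v') (P u'), IH1, IH2, IH3, mul_comm c e]
      abel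

include hleft hright hrec in
lemma mqs_comm : ∀ x y : TensorAlgebra k A, mqs x y = mqs y x := by
  have hbil : mqs = mqs.flip := by
    apply LinearMap.ext_on span_P_top
    rintro x ⟨u, rfl⟩
    apply LinearMap.ext_on span_P_top
    rintro y ⟨v, rfl⟩
    exact mqs_comm_pure mqs hleft hright hrec (u.length + v.length) u v le_rfl
  intro x y
  conv_lhs => rw [hbil]
  rfl

include hleft hright hrec in
lemma revMap_mqs_pure : ∀ (N : ℕ) (u v : List A), u.length + v.length ≤ N →
    revMap (mqs (P u) (P v)) = mqs (revMap (P u)) (revMap (P v)) := by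
  intro N
  induction N with
  | zero =>
    rintro u v h
    match u, v with
    | [], [] => simp only [P_nil, hleft, revMap_one]
    | c :: u', v => simp at h
    | u, c :: v' => simp at h
  | succ N ih =>
    rintro u v h
    match u, v with
    | [], v => simp only [P_nil, hleft, revMap_one]
    | c :: u', [] => simp only [P_nil, hright, revMap_one]
    | c :: u', e :: v' =>
      have IH1 := ih u' (e :: v') (by simp at h ⊢; omega)
      have IH2 := ih (c :: u') v' (by simp at h ⊢; omega)
      have IH3 := ih u' v' (by simp at h ⊢; omega)
      simp only [P_cons] at IH1 IH2 ⊢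
      rw [hrec c e (P u') (P v')]
      simp only [map_add, revMap_ι_mul] at IH1 IH2 ⊢
      rw [IH1, IH2, IH3, mqs_recR mqs hleft hright hrec c e (revMap (P u')) (revMap (P v'))]

include hleft hright hrec in
lemma revMap_mqs : ∀ x y : TensorAlgebra k A,
    revMap (mqs x y) = mqs (revMap x) (revMap y) := by
  have hbil : mqs.compr₂ (revMap (k := k) (A := A))
      = (mqs.comp revMap).compl₂ revMap := by
    apply LinearMap.ext_on span_P_top
    rintro x ⟨u, rfl⟩
    apply LinearMap.ext_on span_P_top
    rintro y ⟨v, rfl⟩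
    simpa only [LinearMap.compl₂_apply, LinearMap.compr₂_apply, LinearMap.comp_apply]
      using revMap_mqs_pure mqs hleft hright hrec (u.length + v.length) u v le_rfl
  intro x y
  have h := DFunLike.congr_fun (DFunLike.congr_fun hbil x) y
  simpa only [LinearMap.compl₂_apply, LinearMap.compr₂_apply, LinearMap.comp_apply] using h

end mqslemmas

/-! ### blocksMul and reversal -/

lemma blocksMul_append (M N : List ℕ) (e : List A) :
    blocksMul (M ++ N) e = blocksMul M (e.take M.sum) ++ blocksMul N (e.drop M.sum) := by
  induction M generalizing e with
  | nil => simp [blocksMul]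
  | cons m M' ih =>
    simp only [List.cons_append, blocksMul, List.sum_cons, List.append_eq]
    rw [ih (e.drop m)]
    have e1 : (e.take (m + M'.sum)).take m = e.take m := by
      rw [List.take_take]; congr 1; omega
    have e2 : (e.take (m + M'.sum)).drop m = (e.drop m).take M'.sum := by
      rw [List.drop_take]; congr 1; omega
    have e3 : (e.drop m).drop M'.sum = e.drop (m + M'.sum) := by
      rw [List.drop_drop]; try congr 1; try omega
    rw [e1, e2, e3]

lemma blocksMul_reverse : ∀ (L : List ℕ) (d : List A), L.sum = d.length →
    (blocksMul L d).reverse = blocksMul L.reverse d.reverse := by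
  intro L
  induction L with
  | nil => simp [blocksMul]
  | cons l L' ih =>
    intro d h
    simp only [List.sum_cons] at h
    have hl : l ≤ d.length := by omega
    have hsum' : L'.sum = (d.drop l).length := by rw [List.length_drop]; omega
    simp only [blocksMul, List.reverse_cons]
    rw [ih (d.drop l) hsum', blocksMul_append]
    have hrs : L'.reverse.sum = d.length - l := by rw [List.sum_reverse]; omega
    have h1 : d.reverse.take L'.reverse.sum = (d.drop l).reverse := by
      rw [List.reverse_drop, hrs]
    have h2 : d.reverse.drop L'.reverse.sum = (d.take l).reverse := by
      rw [List.drop_reverse]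
      congr 2
      omega
    rw [h1, h2]
    have h3 : ((d.take l).reverse).take l = (d.take l).reverse :=
      List.take_of_length_le (by rw [List.length_reverse, List.length_take]; omega)
    simp only [blocksMul]
    rw [h3, List.prod_reverse]

lemma comps_reverse_mem {n : ℕ} {L : List ℕ} (h : L ∈ comps n) : L.reverse ∈ comps n := by
  rw [mem_comps] at h ⊢
  exact ⟨fun l hl => h.1 l (List.mem_reverse.mp hl), by rw [List.sum_reverse]; exact h.2⟩

lemma revMap_U (d : List A) :
    revMap (Ublocks (k := k) d) = Ublocks (k := k) d.reverse := by
  rw [Ublocks, Ublocks, map_sum]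
  rw [List.length_reverse]
  refine Finset.sum_nbij' (fun L => L.reverse) (fun L => L.reverse) ?_ ?_ ?_ ?_ ?_
  · intro L hL; exact comps_reverse_mem hL
  · intro L hL; exact comps_reverse_mem hL
  · intro L _; simp
  · intro L _; simp
  · intro L hL
    rw [revMap_P, blocksMul_reverse L d ((mem_comps _ _).mp hL).2]

section keysec
variable (hleft : ∀ x : TensorAlgebra k A, mqs 1 x = x)
    (hright : ∀ x : TensorAlgebra k A, mqs x 1 = x)
    (hrec : ∀ (a b : A) (x y : TensorAlgebra k A),
      mqs (TensorAlgebra.ι k a * x) (TensorAlgebra.ι k b * y) =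
        TensorAlgebra.ι k a * mqs x (TensorAlgebra.ι k b * y) +
          TensorAlgebra.ι k b * mqs (TensorAlgebra.ι k a * x) y +
          TensorAlgebra.ι k (a * b) * mqs x y)

include hleft hright hrec in
lemma keyLemma : ∀ (s d : List A) (x : A),
    ∑ i ∈ Finset.range (s.length + 1),
      ((-1 : ℤ) ^ i) • mqs (Ublocks ((s.take i).reverse ++ (x :: d))) (P (s.drop i))
    = ∑ j ∈ Finset.range (d.length + 1),
        ιt (x * (d.take j).prod) * mqs (Ublocks (d.drop j)) (P s) := by
  intro s
  induction s with
  | nil =>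
    intro d x
    simp only [List.length_nil, zero_add]
    rw [Finset.sum_range_one]
    simp only [List.take_nil, List.drop_nil, List.reverse_nil, List.nil_append,
      pow_zero, one_smul, P_nil, hright]
    rw [U_cons]
  | cons y t IH =>
    intro d x
    rw [show (y :: t).length + 1 = (t.length + 1) + 1 from rfl, Finset.sum_range_succ']
    have hA : ∀ i, ((-1 : ℤ) ^ (i+1)) • mqs (Ublocks (((y :: t).take (i+1)).reverse ++ (x :: d)))
          (P ((y :: t).drop (i+1)))
        = -(((-1 : ℤ) ^ i) • mqs (Ublocks ((t.take i).reverse ++ (y :: x :: d))) (P (t.drop i))) := by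
      intro i
      have hl : ((y :: t).take (i+1)).reverse ++ (x :: d)
          = (t.take i).reverse ++ (y :: x :: d) := by
        simp [List.take_succ_cons, List.reverse_cons, List.append_assoc]
      rw [hl, List.drop_succ_cons, pow_succ, mul_neg_one, neg_smul]
    rw [Finset.sum_congr rfl (fun i _ => hA i), Finset.sum_neg_distrib,
      IH (x :: d) y]
    rw [show (x :: d).length + 1 = (d.length + 1) + 1 from rfl, Finset.sum_range_succ']
    simp only [List.take_succ_cons, List.drop_succ_cons, List.take_zero, List.drop_zero,
      List.prod_nil, List.prod_cons, mul_one, pow_zero, one_smul, List.take_nil,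
      List.reverse_nil, List.nil_append]
    rw [P_cons y t]
    rw [U_cons x d, map_sum, LinearMap.sum_apply, LinearMap.sum_apply]
    have hB : ∀ j, mqs (ιt (x * (d.take j).prod) * Ublocks (d.drop j)) (ιt y * P t)
        = ιt (x * (d.take j).prod) * mqs (Ublocks (d.drop j)) (ιt y * P t)
          + ιt y * mqs (ιt (x * (d.take j).prod) * Ublocks (d.drop j)) (P t)
          + ιt (x * (d.take j).prod * y) * mqs (Ublocks (d.drop j)) (P t) := fun j =>
      hrec _ _ _ _
    rw [Finset.sum_congr rfl (fun j _ => hB j), Finset.sum_add_distrib,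
      Finset.sum_add_distrib, Finset.mul_sum]
    have hD : ∀ j, ιt (y * (x * (d.take j).prod)) * mqs (Ublocks (d.drop j)) (P t)
        = ιt (x * (d.take j).prod * y) * mqs (Ublocks (d.drop j)) (P t) := by
      intro j
      rw [mul_comm (x * (d.take j).prod) y]
    rw [Finset.sum_congr rfl (fun j _ => hD j)]
    abel

include hleft hright hrec in
lemma identityA : ∀ (s : List A), s ≠ [] →
    ∑ i ∈ Finset.range (s.length + 1),
      ((-1 : ℤ) ^ i) • mqs (Ublocks ((s.take i).reverse)) (P (s.drop i)) = 0 := by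
  intro s hs
  match s with
  | y :: t =>
    rw [show (y :: t).length + 1 = (t.length + 1) + 1 from rfl, Finset.sum_range_succ']
    have hA : ∀ i, ((-1 : ℤ) ^ (i+1)) • mqs (Ublocks (((y :: t).take (i+1)).reverse))
          (P ((y :: t).drop (i+1)))
        = -(((-1 : ℤ) ^ i) • mqs (Ublocks ((t.take i).reverse ++ (y :: []))) (P (t.drop i))) := by
      intro i
      have hl : ((y :: t).take (i+1)).reverse = (t.take i).reverse ++ (y :: []) := by
        simp [List.take_succ_cons, List.reverse_cons]
      rw [hl, List.drop_succ_cons, pow_succ, mul_neg_one, neg_smul]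
    rw [Finset.sum_congr rfl (fun i _ => hA i), Finset.sum_neg_distrib,
      keyLemma mqs hleft hright hrec t [] y]
    simp only [List.take_nil, List.drop_nil, List.reverse_nil, List.length_nil,
      List.prod_nil, mul_one, pow_zero, one_smul]
    rw [Finset.sum_range_one]
    simp only [List.take_zero, List.drop_zero, List.take_nil, List.drop_nil,
      List.reverse_nil, U_nil, hleft, List.prod_nil, mul_one, P_nil, hright]
    try rw [P_cons]
    abel

include hleft hright hrec in
lemma identityB : ∀ (b : List A), b ≠ [] →
    ∑ i ∈ Finset.range (b.length + 1),
      ((-1 : ℤ) ^ (b.length - i)) • mqs (P (b.take i)) (Ublocks ((b.drop i).reverse)) = 0 := by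
  intro b hb
  have h0 := identityA mqs hleft hright hrec b.reverse (by simpa using hb)
  rw [List.length_reverse] at h0
  rw [← Finset.sum_range_reflect] at h0
  have h1 : ∀ i ∈ Finset.range (b.length + 1),
      ((-1 : ℤ) ^ (b.length + 1 - 1 - i)) •
        mqs (Ublocks ((b.reverse.take (b.length + 1 - 1 - i)).reverse))
          (P (b.reverse.drop (b.length + 1 - 1 - i)))
      = ((-1 : ℤ) ^ (b.length - i)) •
        mqs (Ublocks (b.drop i)) (P ((b.take i).reverse)) := by
    intro i hi
    have hi' : i ≤ b.length := Nat.lt_succ_iff.mp (Finset.mem_range.mp hi)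
    have e0 : b.length + 1 - 1 - i = b.length - i := by omega
    have e1 : b.reverse.take (b.length - i) = (b.drop i).reverse := by
      rw [List.take_reverse, show b.length - (b.length - i) = i from by omega]
    have e2 : b.reverse.drop (b.length - i) = (b.take i).reverse := by
      rw [List.drop_reverse, show b.length - (b.length - i) = i from by omega]
    rw [e0, e1, e2, List.reverse_reverse]
  rw [Finset.sum_congr rfl h1] at h0
  -- apply revMap
  have h2 := congrArg (revMap (k := k) (A := A)) h0
  rw [map_sum, map_zero] at h2
  have h3 : ∀ i ∈ Finset.range (b.length + 1),
      revMap (((-1 : ℤ) ^ (b.length - i)) • mqs (Ublocks (b.drop i)) (P ((b.take i).reverse)))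
      = ((-1 : ℤ) ^ (b.length - i)) • mqs (P (b.take i)) (Ublocks ((b.drop i).reverse)) := by
    intro i hi
    rw [map_zsmul, revMap_mqs mqs hleft hright hrec, revMap_U, revMap_P,
      List.reverse_reverse,
      mqs_comm mqs hleft hright hrec]
  rw [Finset.sum_congr rfl h3] at h2
  exact h2

end keysec

section coalg
variable (Δ : TensorAlgebra k A →ₗ[k] TensorAlgebra k A ⊗[k] TensorAlgebra k A)
    (hΔone : Δ 1 = 1 ⊗ₜ 1)
    (hΔrec : ∀ (a : A) (x : TensorAlgebra k A),
      Δ (TensorAlgebra.ι k a * x) =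
        (TensorAlgebra.ι k a ⊗ₜ (1 : TensorAlgebra k A)) * Δ x +
          (1 : TensorAlgebra k A) ⊗ₜ (TensorAlgebra.ι k a * x))

include hΔone hΔrec in
lemma Δ_pure : ∀ b : List A,
    Δ (P b) = ∑ i ∈ Finset.range (b.length + 1), P (b.take i) ⊗ₜ[k] P (b.drop i) := by
  intro b
  induction b with
  | nil =>
    simp only [List.length_nil, zero_add, Finset.sum_range_one, List.take_nil, List.drop_nil,
      P_nil]
    exact hΔone
  | cons a c ih =>
    rw [P_cons, hΔrec a (P c), ih]
    conv_rhs => rw [show (a :: c).length + 1 = (c.length + 1) + 1 from rfl,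
      Finset.sum_range_succ']
    simp only [List.take_succ_cons, List.drop_succ_cons, List.take_zero, List.drop_zero]
    rw [Finset.mul_sum]
    have h1 : ∀ i ∈ Finset.range (c.length + 1),
        (ιt a ⊗ₜ[k] (1 : TensorAlgebra k A)) * (P (c.take i) ⊗ₜ[k] P (c.drop i))
          = P (a :: c.take i) ⊗ₜ[k] P (c.drop i) := by
      intro i _
      rw [Algebra.TensorProduct.tmul_mul_tmul, one_mul, P_cons]
    rw [Finset.sum_congr rfl h1, P_nil, P_cons]

end coalg

end aux

/-- the quasi-shuffle bialgebra `(QS(A), *, 1, Δ, ε)` is a Hopf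
algebra, whose antipode `S` is given on a pure tensor `𝐚 = a_1 ⊗ ⋯ ⊗ a_n` by
`S(𝐚) = (−1)^n ∑_{L ⊨ n} L ∘ 𝐚^r`. -/
theorem stmt8 {k A : Type*} [CommRing k] [CommRing A] [Algebra k A] [Algebra ℚ k]
    (mqs : TensorAlgebra k A →ₗ[k] TensorAlgebra k A →ₗ[k] TensorAlgebra k A)
    (hleft : ∀ x : TensorAlgebra k A, mqs 1 x = x)
    (hright : ∀ x : TensorAlgebra k A, mqs x 1 = x)
    (hrec : ∀ (a b : A) (x y : TensorAlgebra k A),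
      mqs (TensorAlgebra.ι k a * x) (TensorAlgebra.ι k b * y) =
        TensorAlgebra.ι k a * mqs x (TensorAlgebra.ι k b * y) +
          TensorAlgebra.ι k b * mqs (TensorAlgebra.ι k a * x) y +
          TensorAlgebra.ι k (a * b) * mqs x y)
    (Δ : TensorAlgebra k A →ₗ[k] TensorAlgebra k A ⊗[k] TensorAlgebra k A)
    (hΔone : Δ 1 = 1 ⊗ₜ 1)
    (hΔrec : ∀ (a : A) (x : TensorAlgebra k A),
      Δ (TensorAlgebra.ι k a * x) =
        (TensorAlgebra.ι k a ⊗ₜ (1 : TensorAlgebra k A)) * Δ x +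
          (1 : TensorAlgebra k A) ⊗ₜ (TensorAlgebra.ι k a * x))
    (ε : TensorAlgebra k A →ₗ[k] k)
    (hεone : ε 1 = 1)
    (hεrec : ∀ (a : A) (x : TensorAlgebra k A), ε (TensorAlgebra.ι k a * x) = 0)
    -- the antipode, given by the asserted formula on pure tensors
    (S : TensorAlgebra k A →ₗ[k] TensorAlgebra k A)
    (hS : ∀ b : List A,
      S (pureTensor k b) = ((-1 : ℤ) ^ b.length) •
        ∑ᶠ L ∈ Comps b.length, pureTensor k (blocksMul L b.reverse)) :
    ∀ x : TensorAlgebra k A,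
      TensorProduct.lift mqs (TensorProduct.map S LinearMap.id (Δ x)) =
          ε x • (1 : TensorAlgebra k A) ∧
        TensorProduct.lift mqs (TensorProduct.map LinearMap.id S (Δ x)) =
          ε x • (1 : TensorAlgebra k A) := by
  have hS' : ∀ b : List A, S (pureTensor k b)
      = ((-1 : ℤ) ^ b.length) • Ublocks (k := k) b.reverse := by
    intro b
    rw [hS b, Comps_eq_coe, finsum_mem_coe_finset, Ublocks, List.length_reverse]
  have goal1 : (TensorProduct.lift mqs) ∘ₗ ((TensorProduct.map S LinearMap.id) ∘ₗ Δ)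
      = (LinearMap.toSpanSingleton k _ 1) ∘ₗ ε := by
    apply LinearMap.ext_on span_P_top
    rintro x ⟨b, rfl⟩
    simp only [LinearMap.comp_apply, LinearMap.toSpanSingleton_apply]
    rw [Δ_pure Δ hΔone hΔrec b, map_sum, map_sum]
    simp only [TensorProduct.map_tmul, TensorProduct.lift.tmul, LinearMap.id_coe, id_eq]
    have h2 : ∀ i ∈ Finset.range (b.length + 1),
        mqs (S (pureTensor k (b.take i))) (pureTensor k (b.drop i))
          = ((-1 : ℤ) ^ i) • mqs (Ublocks ((b.take i).reverse)) (pureTensor k (b.drop i)) := by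
      intro i hi
      have hi' : i ≤ b.length := Nat.lt_succ_iff.mp (Finset.mem_range.mp hi)
      have hlen : (b.take i).length = i := by rw [List.length_take]; omega
      rw [hS' (b.take i), hlen, map_zsmul, LinearMap.smul_apply]
    rw [Finset.sum_congr rfl h2]
    match b with
    | [] =>
      simp only [List.length_nil, zero_add, Finset.sum_range_one, List.take_nil,
        List.drop_nil, List.reverse_nil, pow_zero, one_smul, U_nil, P_nil, hleft, hεone]
    | y :: c =>
      rw [identityA mqs hleft hright hrec (y :: c) (by simp)]
      rw [P_cons, hεrec, zero_smul]
  have goal2 : (TensorProduct.lift mqs) ∘ₗ ((TensorProduct.map LinearMap.id S) ∘ₗ Δ)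
      = (LinearMap.toSpanSingleton k _ 1) ∘ₗ ε := by
    apply LinearMap.ext_on span_P_top
    rintro x ⟨b, rfl⟩
    simp only [LinearMap.comp_apply, LinearMap.toSpanSingleton_apply]
    rw [Δ_pure Δ hΔone hΔrec b, map_sum, map_sum]
    simp only [TensorProduct.map_tmul, TensorProduct.lift.tmul, LinearMap.id_coe, id_eq]
    have h2 : ∀ i ∈ Finset.range (b.length + 1),
        mqs (pureTensor k (b.take i)) (S (pureTensor k (b.drop i)))
          = ((-1 : ℤ) ^ (b.length - i)) •
              mqs (pureTensor k (b.take i)) (Ublocks ((b.drop i).reverse)) := by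
      intro i hi
      have hlen : (b.drop i).length = b.length - i := by rw [List.length_drop]
      rw [hS' (b.drop i), hlen, map_zsmul]
    rw [Finset.sum_congr rfl h2]
    match b with
    | [] =>
      simp only [List.length_nil, zero_add, Finset.sum_range_one, List.take_nil,
        List.drop_nil, List.reverse_nil, Nat.zero_sub, pow_zero, one_smul, U_nil, P_nil,
        hleft, hεone]
    | y :: c =>
      rw [identityB mqs hleft hright hrec (y :: c) (by simp)]
      rw [P_cons, hεrec, zero_smul]
  intro x
  constructor
  · have h := DFunLike.congr_fun goal1 x
    simpa only [LinearMap.comp_apply, LinearMap.toSpanSingleton_apply] using h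
  · have h := DFunLike.congr_fun goal2 x
    simpa only [LinearMap.comp_apply, LinearMap.toSpanSingleton_apply] using h
end

section
/- Let E be a commutative additively finite monoid whose nonzero elements form a subsemigroup. The linear map M : k⟨multi-compositions with exponents in E⟩ → EQSym[m], sending a multi-composition w to the monomial multi-quasisymmetric function M_w, is a bijection and satisfies M(w1 * w2) = M_{w1} M_{w2}, where * is the quasi-shuffle product. Consequently EQSym[m] is a subalgebra of the formal power series algebra k[[X]]^E. -/
/-!
Evaluated at a monomial `x^d`, both sides of the product formula count the pairs `(j, j')` of
increasing index lists with `x_j^{w₁} x_{j'}^{w₂} = x^d`. On the product side this is immediate.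
On the quasi-shuffle side, merge `j` and `j'` into their increasing union and record for each
index whether it comes from `j`, from `j'` or from both: this is exactly a quasi-shuffle pattern
of `w₁` and `w₂` together with an increasing placement of the resulting word, and splitting the
union back is the inverse. Each `M_w` with nonzero letters counts its placements because a
monomial built from nonzero letters at increasing indices determines the indices (its nonzero
columns) and hence the word; the same fact gives linear independence, since `M_{w'}` takes the
value `[w' = w]` at `x_1^{w_1} ⋯ x_k^{w_k}`. Since every exponent has finitely many
decompositions, the product is bilinear, so the span of the `M_w` is closed under it.
-/

open scoped Classical

/-- The quasi-shuffle product of two words over an alphabet `C` with a binary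
operation `op`, with values in the free `k`-module on words. -/
noncomputable def qsh {k : Type*} [CommRing k] {C : Type*} (op : C → C → C) :
    List C → List C → (List C →₀ k)
  | [], y => Finsupp.single y 1
  | x, [] => Finsupp.single x 1
  | a :: x, b :: y =>
      (qsh op x (b :: y)).mapDomain (a :: ·) + (qsh op (a :: x) y).mapDomain (b :: ·) +
        (qsh op x y).mapDomain (op a b :: ·)
  termination_by x y => x.length + y.length
  decreasing_by all_goals simp [List.length_cons] <;> omega

/-- The exponent of `x_j^w` for a formal monomial `w ∈ [m]^E`. -/
noncomputable def colExpE {E : Type*} [AddCommMonoid E] (m : ℕ)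
    (w : Fin m → E) (j : ℕ+) : (Fin m × ℕ+) →₀ E :=
  ∑ i : Fin m, Finsupp.single (i, j) (w i)

/-- The exponent of the monomial `x_{j_1}^{w_1} ⋯ x_{j_k}^{w_k}`. -/
noncomputable def seqExpE {E : Type*} [AddCommMonoid E] (m : ℕ)
    (w : List (Fin m → E)) (j : List ℕ+) : (Fin m × ℕ+) →₀ E :=
  (List.zipWith (colExpE m) w j).sum

/-- The monomial multi-quasisymmetric function with semigroup exponents,
`M_w = ∑_{j_1 < ⋯ < j_k} x_{j_1}^{w_1} ⋯ x_{j_k}^{w_k}`, as a formal power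
series with exponents in `E` (a coefficient function on monomials). -/
noncomputable def MwE (k : Type*) [CommRing k] {E : Type*} [AddCommMonoid E]
    (m : ℕ) (w : List (Fin m → E)) : ((Fin m × ℕ+) →₀ E) → k :=
  fun d => if ∃ j : List ℕ+, j.length = w.length ∧ j.Chain' (· < ·) ∧
      seqExpE m w j = d then 1 else 0

/-- The multiplication of the formal power series algebra `k[[X]]^E`. -/
noncomputable def mulE {k : Type*} [CommRing k] {E : Type*} [AddCommMonoid E]
    (m : ℕ) (f g : ((Fin m × ℕ+) →₀ E) → k) : ((Fin m × ℕ+) →₀ E) → k :=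
  fun d => ∑ᶠ p ∈ {p : ((Fin m × ℕ+) →₀ E) × ((Fin m × ℕ+) →₀ E) |
    p.1 + p.2 = d}, f p.1 * g p.2

section ColumnExponents

variable {E : Type*} [AddCommMonoid E] {m : ℕ}

lemma colExpE_apply (a : Fin m → E) (c : ℕ+) (i : Fin m) (c' : ℕ+) :
    colExpE m a c (i, c') = if c' = c then a i else 0 := by
  rw [colExpE, Finsupp.finsetSum_apply]
  split_ifs with h
  · simp [Finsupp.single_apply, h]
  · simp [Ne.symm h]

lemma colExpE_add (a b : Fin m → E) (c : ℕ+) :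
    colExpE m (a + b) c = colExpE m a c + colExpE m b c := by
  simp only [colExpE, Pi.add_apply, Finsupp.single_add, Finset.sum_add_distrib]

@[simp]
lemma seqExpE_nil_left (j : List ℕ+) : seqExpE m ([] : List (Fin m → E)) j = 0 := by
  simp [seqExpE]

@[simp]
lemma seqExpE_nil_right (w : List (Fin m → E)) : seqExpE m w [] = 0 := by
  simp [seqExpE]

@[simp]
lemma seqExpE_cons_cons (a : Fin m → E) (w : List (Fin m → E)) (c : ℕ+) (j : List ℕ+) :
    seqExpE m (a :: w) (c :: j) = colExpE m a c + seqExpE m w j := by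
  simp [seqExpE]

lemma seqExpE_apply_of_notMem {w : List (Fin m → E)} {j : List ℕ+} {c : ℕ+} (hc : c ∉ j)
    (i : Fin m) : seqExpE m w j (i, c) = 0 := by
  induction w generalizing j with
  | nil => simp
  | cons a w ih =>
    cases j with
    | nil => simp
    | cons c' j =>
      rw [List.mem_cons, not_or] at hc
      simp [colExpE_apply, hc.1, ih hc.2]

lemma map_seqExpE_apply {w : List (Fin m → E)} {j : List ℕ+} (hj : j.Nodup)
    (hl : j.length = w.length) : j.map (fun c i => seqExpE m w j (i, c)) = w := by
  induction w generalizing j with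
  | nil => simp_all
  | cons a w ih =>
    obtain _ | ⟨c, j⟩ := j
    · simp at hl
    rw [List.nodup_cons] at hj
    refine congrArg₂ List.cons ?_ ((List.map_congr_left fun c' hc' => ?_).trans
      (ih hj.2 (Nat.succ_injective hl)))
    · ext i
      simp [colExpE_apply, seqExpE_apply_of_notMem hj.1]
    · have : c' ≠ c := fun h => hj.1 (h ▸ hc')
      ext i
      simp [colExpE_apply, this]

lemma mem_iff_exists_seqExpE_apply_ne_zero {w : List (Fin m → E)} {j : List ℕ+}
    (hw : ∀ a ∈ w, a ≠ 0) (hj : j.Nodup) (hl : j.length = w.length) (c : ℕ+) :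
    c ∈ j ↔ ∃ i, seqExpE m w j (i, c) ≠ 0 := by
  refine ⟨fun hc => ?_, fun ⟨i, hi⟩ => by_contra fun hc => hi (seqExpE_apply_of_notMem hc i)⟩
  have hmem := List.mem_map_of_mem (f := fun c i => seqExpE m w j (i, c)) hc
  rw [map_seqExpE_apply hj hl] at hmem
  simpa [Function.ne_iff] using hw _ hmem

theorem eq_of_seqExpE_eq {w w' : List (Fin m → E)} {j j' : List ℕ+}
    (hw : ∀ a ∈ w, a ≠ 0) (hw' : ∀ a ∈ w', a ≠ 0)
    (hj : j.Pairwise (· < ·)) (hj' : j'.Pairwise (· < ·))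
    (hl : j.length = w.length) (hl' : j'.length = w'.length)
    (h : seqExpE m w j = seqExpE m w' j') : w = w' ∧ j = j' := by
  have hjj : j = j' := hj.eq_of_mem_iff hj' fun c => by
    rw [mem_iff_exists_seqExpE_apply_ne_zero hw hj.nodup hl,
      mem_iff_exists_seqExpE_apply_ne_zero hw' hj'.nodup hl', h]
  refine ⟨?_, hjj⟩
  rw [← map_seqExpE_apply hj.nodup hl, ← map_seqExpE_apply hj'.nodup hl', h, hjj]

end ColumnExponents

/-- Where a letter of a quasi-shuffle of two words comes from: the left word, the right word,
or both (the two letters combined by the operation). -/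
inductive Origin
  | left
  | right
  | both
  deriving DecidableEq

section QuasiShuffle

variable {C : Type*} (op : C → C → C)

def mergeAlong : List Origin → List C → List C → List C
  | .left :: s, a :: x, y => a :: mergeAlong s x y
  | .right :: s, x, b :: y => b :: mergeAlong s x y
  | .both :: s, a :: x, b :: y => op a b :: mergeAlong s x y
  | _, _, _ => []

def shufflePatterns : ℕ → ℕ → Finset (List Origin)
  | 0, q => {List.replicate q .right}
  | p + 1, 0 => {List.replicate (p + 1) .left}
  | p + 1, q + 1 =>
    (shufflePatterns p (q + 1)).map ⟨_, List.cons_injective (a := .left)⟩ ∪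
      (shufflePatterns (p + 1) q).map ⟨_, List.cons_injective (a := .right)⟩ ∪
      (shufflePatterns p q).map ⟨_, List.cons_injective (a := .both)⟩

lemma length_eq_count_add_count_add_count (s : List Origin) :
    s.length = s.count .left + s.count .right + s.count .both := by
  induction s with
  | nil => rfl
  | cons o s ih => cases o <;> simp [ih] <;> omega

lemma mem_shufflePatterns {p q : ℕ} {s : List Origin} :
    s ∈ shufflePatterns p q ↔
      s.count .left + s.count .both = p ∧ s.count .right + s.count .both = q := by
  induction p, q using shufflePatterns.induct generalizing s with
  | case1 n | case2 n =>
    rw [shufflePatterns, Finset.mem_singleton]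
    refine ⟨by rintro rfl; simp [List.count_replicate], fun ⟨h₁, h₂⟩ => ?_⟩
    have hlen := length_eq_count_add_count_add_count s
    refine List.eq_replicate_iff.2 ⟨by omega, fun b hb => ?_⟩
    exact (List.count_eq_length.1 (by omega) b hb).symm
  | case3 p q ih₁ ih₂ ih₃ =>
    obtain _ | ⟨o, s⟩ := s
    · simp [shufflePatterns]
    cases o <;> simp [shufflePatterns, ih₁, ih₂, ih₃] <;> omega

@[simp]
lemma mergeAlong_replicate_right (y : List C) :
    mergeAlong op (List.replicate y.length .right) [] y = y := by
  induction y <;> simp_all [List.replicate_succ, mergeAlong]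

@[simp]
lemma mergeAlong_replicate_left (x : List C) :
    mergeAlong op (List.replicate x.length .left) x [] = x := by
  induction x <;> simp_all [List.replicate_succ, mergeAlong]

theorem qsh_eq_sum_shufflePatterns {k : Type*} [CommRing k] (x y : List C) :
    qsh (k := k) op x y =
      ∑ s ∈ shufflePatterns x.length y.length, Finsupp.single (mergeAlong op s x y) 1 := by
  induction x, y using qsh.induct with
  | case1 y => simp [qsh, shufflePatterns]
  | case2 x hx =>
    obtain _ | ⟨a, x⟩ := x
    · exact absurd rfl hx
    rw [qsh]
    · simp only [List.length_cons, List.length_nil, shufflePatterns, Finset.sum_singleton]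
      rw [← List.length_cons, mergeAlong_replicate_left]
    · simp
  | case3 a x b y ih₁ ih₂ ih₃ =>
    rw [qsh, ih₁, ih₂, ih₃]
    simp only [List.length_cons, shufflePatterns]
    rw [Finset.sum_union, Finset.sum_union]
    · simp [Finsupp.mapDomain_finsetSum, mergeAlong]
    all_goals
      rw [Finset.disjoint_left]
      aesop

lemma qsh_sum_smul_eq_sum {k M : Type*} [CommRing k] [AddCommMonoid M] [Module k M]
    (F : List C → M) (x y : List C) :
    ((qsh (k := k) op x y).sum fun z c => c • F z) =
      ∑ s ∈ shufflePatterns x.length y.length, F (mergeAlong op s x y) := by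
  rw [qsh_eq_sum_shufflePatterns, ← Finsupp.sum_finsetSum_index (by simp) (by simp [add_smul])]
  simp

lemma mergeAlong_eq_nil_of_not_match {t : List Origin} {x y : List C}
    (h₁ : ∀ s a x', t = .left :: s → x = a :: x' → False)
    (h₂ : ∀ s b y', t = .right :: s → y = b :: y' → False)
    (h₃ : ∀ s a x' b y', t = .both :: s → x = a :: x' → y = b :: y' → False) :
    mergeAlong op t x y = [] := by
  rw [mergeAlong.eq_def]
  split
  · exact (h₁ _ _ _ rfl rfl).elim
  · exact (h₂ _ _ _ rfl rfl).elim
  · exact (h₃ _ _ _ _ _ rfl rfl rfl).elim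
  · rfl

lemma length_mergeAlong {s : List Origin} {x y : List C}
    (hs : s ∈ shufflePatterns x.length y.length) : (mergeAlong op s x y).length = s.length := by
  induction s, x, y using mergeAlong.induct with
  | case1 s a x y ih | case2 s x b y ih | case3 s a x b y ih =>
    simp only [mem_shufflePatterns, List.count_cons, List.length_cons] at hs ih
    simp [mergeAlong, ih (by simp at hs; omega)]
  | case4 t x y h₁ h₂ h₃ =>
    rw [mergeAlong_eq_nil_of_not_match op h₁ h₂ h₃]
    obtain _ | ⟨o, s⟩ := t
    · rfl
    rw [mem_shufflePatterns] at hs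
    cases o <;> cases x <;> cases y <;> simp_all
    exact h₃ _ _ _ _ _ rfl rfl rfl rfl rfl

lemma forall_mem_mergeAlong {P : C → Prop} (hop : ∀ a b, P a → P b → P (op a b))
    (s : List Origin) {x y : List C} (hx : ∀ a ∈ x, P a) (hy : ∀ b ∈ y, P b) :
    ∀ c ∈ mergeAlong op s x y, P c := by
  induction s, x, y using mergeAlong.induct with
  | case1 s a x y ih => simp_all [mergeAlong]
  | case2 s x b y ih => simp_all [mergeAlong]
  | case3 s a x b y ih => simp_all [mergeAlong]
  | case4 t x y h₁ h₂ h₃ => simp [mergeAlong_eq_nil_of_not_match op h₁ h₂ h₃]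

end QuasiShuffle

section IndexLists

variable {ι : Type*}

def leftIndices (l : List (Origin × ι)) : List ι := (l.filter (·.1 ≠ .right)).map Prod.snd

def rightIndices (l : List (Origin × ι)) : List ι := (l.filter (·.1 ≠ .left)).map Prod.snd

@[simp]
lemma leftIndices_nil : leftIndices ([] : List (Origin × ι)) = [] := rfl

@[simp]
lemma rightIndices_nil : rightIndices ([] : List (Origin × ι)) = [] := rfl

@[simp]
lemma leftIndices_cons (o : Origin) (i : ι) (l : List (Origin × ι)) :
    leftIndices ((o, i) :: l) = if o = .right then leftIndices l else i :: leftIndices l := by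
  cases o <;> simp [leftIndices]

@[simp]
lemma rightIndices_cons (o : Origin) (i : ι) (l : List (Origin × ι)) :
    rightIndices ((o, i) :: l) = if o = .left then rightIndices l else i :: rightIndices l := by
  cases o <;> simp [rightIndices]

lemma length_leftIndices (l : List (Origin × ι)) :
    (leftIndices l).length = (l.map Prod.fst).count .left + (l.map Prod.fst).count .both := by
  induction l with
  | nil => rfl
  | cons p l ih => obtain ⟨o, i⟩ := p; cases o <;> simp [ih] <;> omega

lemma length_rightIndices (l : List (Origin × ι)) :
    (rightIndices l).length = (l.map Prod.fst).count .right + (l.map Prod.fst).count .both := by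
  induction l with
  | nil => rfl
  | cons p l ih => obtain ⟨o, i⟩ := p; cases o <;> simp [ih] <;> omega

lemma map_fst_mem_shufflePatterns_iff {l : List (Origin × ι)} {p q : ℕ} :
    l.map Prod.fst ∈ shufflePatterns p q ↔
      (leftIndices l).length = p ∧ (rightIndices l).length = q := by
  rw [mem_shufflePatterns, length_leftIndices, length_rightIndices]

lemma leftIndices_sublist (l : List (Origin × ι)) : (leftIndices l).Sublist (l.map Prod.snd) :=
  (List.filter_sublist).map _

lemma rightIndices_sublist (l : List (Origin × ι)) : (rightIndices l).Sublist (l.map Prod.snd) :=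
  (List.filter_sublist).map _

lemma mem_leftIndices_or_mem_rightIndices {l : List (Origin × ι)} {i : ι}
    (hi : i ∈ l.map Prod.snd) : i ∈ leftIndices l ∨ i ∈ rightIndices l := by
  induction l with
  | nil => simp at hi
  | cons p l ih =>
    obtain ⟨o, i'⟩ := p
    rcases List.mem_cons.1 hi with rfl | hl
    · cases o <;> simp
    · rcases ih hl with h | h <;> cases o <;> simp [h]

lemma eq_map_left_of_rightIndices_eq_nil {l : List (Origin × ι)} (h : rightIndices l = []) :
    l = (leftIndices l).map (.left, ·) := by
  induction l with
  | nil => rfl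
  | cons p l ih =>
    obtain ⟨o, i⟩ := p
    cases o <;> simp only [rightIndices_cons, reduceCtorEq, if_true, if_false] at h
    rw [leftIndices_cons, if_neg (by decide), List.map_cons, ← ih h]

lemma eq_map_right_of_leftIndices_eq_nil {l : List (Origin × ι)} (h : leftIndices l = []) :
    l = (rightIndices l).map (.right, ·) := by
  induction l with
  | nil => rfl
  | cons p l ih =>
    obtain ⟨o, i⟩ := p
    cases o <;> simp only [leftIndices_cons, reduceCtorEq, if_true, if_false] at h
    rw [rightIndices_cons, if_neg (by decide), List.map_cons, ← ih h]

variable [LinearOrder ι]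

def mergeWithOrigin : List ι → List ι → List (Origin × ι)
  | [], j' => j'.map (.right, ·)
  | i :: j, [] => (i :: j).map (.left, ·)
  | i :: j, i' :: j' =>
    if i < i' then (.left, i) :: mergeWithOrigin j (i' :: j')
    else if i' < i then (.right, i') :: mergeWithOrigin (i :: j) j'
    else (.both, i) :: mergeWithOrigin j j'
  termination_by j j' => j.length + j'.length

@[simp]
lemma leftIndices_mergeWithOrigin (j j' : List ι) : leftIndices (mergeWithOrigin j j') = j := by
  induction j, j' using mergeWithOrigin.induct with
  | case1 j' => simp [mergeWithOrigin, leftIndices, List.filter_map, Function.comp_def]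
  | case2 i j => simp [mergeWithOrigin, leftIndices, List.filter_map, Function.comp_def]
  | case3 i j i' j' h ih => simp [mergeWithOrigin, h, ih]
  | case4 i j i' j' h h' ih => simp [mergeWithOrigin, h, h', ih]
  | case5 i j i' j' h h' ih => simp [mergeWithOrigin, h, h', ih]

@[simp]
lemma rightIndices_mergeWithOrigin (j j' : List ι) : rightIndices (mergeWithOrigin j j') = j' := by
  induction j, j' using mergeWithOrigin.induct with
  | case1 j' => simp [mergeWithOrigin, rightIndices, List.filter_map, Function.comp_def]
  | case2 i j => simp [mergeWithOrigin, rightIndices, List.filter_map, Function.comp_def]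
  | case3 i j i' j' h ih => simp [mergeWithOrigin, h, ih]
  | case4 i j i' j' h h' ih => simp [mergeWithOrigin, h, h', ih]
  | case5 i j i' j' h h' ih => simp [mergeWithOrigin, ih, le_antisymm (not_lt.1 h) (not_lt.1 h')]

lemma mem_or_mem_of_mem_mergeWithOrigin {j j' : List ι} {i : ι}
    (hi : i ∈ (mergeWithOrigin j j').map Prod.snd) : i ∈ j ∨ i ∈ j' := by
  simpa using mem_leftIndices_or_mem_rightIndices hi

lemma pairwise_mergeWithOrigin {j j' : List ι} (hj : j.Pairwise (· < ·))
    (hj' : j'.Pairwise (· < ·)) : ((mergeWithOrigin j j').map Prod.snd).Pairwise (· < ·) := by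
  induction j, j' using mergeWithOrigin.induct with
  | case1 j' => simpa [mergeWithOrigin, Function.comp_def] using hj'
  | case2 i j => simpa [mergeWithOrigin, Function.comp_def] using hj
  | case3 i j i' j' h ih =>
    rw [List.pairwise_cons] at hj hj'
    simp only [mergeWithOrigin, if_pos h, List.map_cons, List.pairwise_cons]
    refine ⟨fun a ha => ?_, ih hj.2 (List.pairwise_cons.2 hj')⟩
    rcases (mem_or_mem_of_mem_mergeWithOrigin ha).imp_right List.mem_cons.1 with ha | rfl | ha
    exacts [hj.1 a ha, h, h.trans (hj'.1 a ha)]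
  | case4 i j i' j' h h' ih =>
    rw [List.pairwise_cons] at hj hj'
    simp only [mergeWithOrigin, if_neg h, if_pos h', List.map_cons, List.pairwise_cons]
    refine ⟨fun a ha => ?_, ih (List.pairwise_cons.2 hj) hj'.2⟩
    rcases (mem_or_mem_of_mem_mergeWithOrigin ha).imp_left List.mem_cons.1 with (rfl | ha) | ha
    exacts [h', h'.trans (hj.1 a ha), hj'.1 a ha]
  | case5 i j i' j' h h' ih =>
    obtain rfl := le_antisymm (not_lt.1 h') (not_lt.1 h)
    rw [List.pairwise_cons] at hj hj'
    simp only [mergeWithOrigin, lt_irrefl, if_false, List.map_cons, List.pairwise_cons]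
    refine ⟨fun a ha => ?_, ih hj.2 hj'.2⟩
    rcases mem_or_mem_of_mem_mergeWithOrigin ha with ha | ha
    exacts [hj.1 a ha, hj'.1 a ha]

lemma mergeWithOrigin_leftIndices_rightIndices {l : List (Origin × ι)}
    (hl : (l.map Prod.snd).Pairwise (· < ·)) :
    mergeWithOrigin (leftIndices l) (rightIndices l) = l := by
  induction l with
  | nil => simp [mergeWithOrigin]
  | cons p l ih =>
    obtain ⟨o, i⟩ := p
    rw [List.map_cons, List.pairwise_cons] at hl
    have hlt : ∀ a ∈ l.map Prod.snd, i < a := hl.1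
    specialize ih hl.2
    cases o
    · simp only [leftIndices_cons, rightIndices_cons, reduceCtorEq, if_false, if_true]
      cases hR : rightIndices l with
      | nil => rw [mergeWithOrigin, List.map_cons, ← eq_map_left_of_rightIndices_eq_nil hR]
      | cons r R =>
        have hr : i < r := hlt r ((rightIndices_sublist l).subset (hR ▸ List.mem_cons_self))
        rw [mergeWithOrigin, if_pos hr, ← hR, ih]
    · simp only [leftIndices_cons, rightIndices_cons, reduceCtorEq, if_false, if_true]
      cases hL : leftIndices l with
      | nil => rw [mergeWithOrigin, List.map_cons, ← eq_map_right_of_leftIndices_eq_nil hL]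
      | cons a L =>
        have ha : i < a := hlt a ((leftIndices_sublist l).subset (hL ▸ List.mem_cons_self))
        rw [mergeWithOrigin, if_neg (not_lt.2 ha.le), if_pos ha, ← hL, ih]
    · simp only [leftIndices_cons, rightIndices_cons, reduceCtorEq, if_false]
      rw [mergeWithOrigin, if_neg (lt_irrefl i), if_neg (lt_irrefl i), ih]

end IndexLists

section Placements

variable {E : Type*} [AddCommMonoid E] {m : ℕ}

lemma seqExpE_mergeAlong {l : List (Origin × ℕ+)} {x y : List (Fin m → E)}
    (hx : (leftIndices l).length = x.length) (hy : (rightIndices l).length = y.length) :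
    seqExpE m (mergeAlong (· + ·) (l.map Prod.fst) x y) (l.map Prod.snd) =
      seqExpE m x (leftIndices l) + seqExpE m y (rightIndices l) := by
  induction l generalizing x y with
  | nil => simp_all [mergeAlong]
  | cons p l ih =>
    obtain ⟨o, i⟩ := p
    cases o
    · obtain _ | ⟨a, x⟩ := x
      · simp at hx
      simp only [leftIndices_cons, rightIndices_cons, reduceCtorEq, if_false, if_true,
        List.length_cons] at hx hy ⊢
      simp [mergeAlong, ih (Nat.succ_injective hx) hy, add_assoc]
    · obtain _ | ⟨b, y⟩ := y
      · simp at hy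
      simp only [leftIndices_cons, rightIndices_cons, reduceCtorEq, if_false, if_true,
        List.length_cons] at hx hy ⊢
      simp [mergeAlong, ih hx (Nat.succ_injective hy), add_left_comm]
    · obtain _ | ⟨a, x⟩ := x
      · simp at hx
      obtain _ | ⟨b, y⟩ := y
      · simp at hy
      simp only [leftIndices_cons, rightIndices_cons, reduceCtorEq, if_false,
        List.length_cons] at hx hy ⊢
      simp [mergeAlong, ih (Nat.succ_injective hx) (Nat.succ_injective hy), colExpE_add,
        add_add_add_comm]

def placements (m : ℕ) (w : List (Fin m → E)) (d : (Fin m × ℕ+) →₀ E) : Set (List ℕ+) :=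
  {j | j.length = w.length ∧ j.Pairwise (· < ·) ∧ seqExpE m w j = d}

lemma MwE_apply (k : Type*) [CommRing k] (w : List (Fin m → E)) (d : (Fin m × ℕ+) →₀ E) :
    MwE k m w d = if (placements m w d).Nonempty then 1 else 0 := by
  simp only [MwE, placements, Set.Nonempty, Set.mem_ofPred_eq, ← List.isChain_iff_pairwise]
  rfl

lemma placements_subsingleton {w : List (Fin m → E)} (hw : ∀ a ∈ w, a ≠ 0)
    (d : (Fin m × ℕ+) →₀ E) : (placements m w d).Subsingleton :=
  fun _ ⟨hl, hj, hd⟩ _ ⟨hl', hj', hd'⟩ =>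
    (eq_of_seqExpE_eq hw hw hj hj' hl hl' (hd.trans hd'.symm)).2

lemma placements_seqExpE_nonempty_iff {w w' : List (Fin m → E)} {j' : List ℕ+}
    (hw : ∀ a ∈ w, a ≠ 0) (hw' : ∀ a ∈ w', a ≠ 0) (hj' : j'.Pairwise (· < ·))
    (hl' : j'.length = w'.length) : (placements m w (seqExpE m w' j')).Nonempty ↔ w = w' := by
  refine ⟨fun ⟨j, hl, hj, h⟩ => (eq_of_seqExpE_eq hw hw' hj hj' hl hl' h).1, ?_⟩
  rintro rfl
  exact ⟨j', hl', hj', rfl⟩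

lemma pairwise_map_succPNat_range (n : ℕ) :
    ((List.range n).map Nat.succPNat).Pairwise (· < ·) := by
  rw [List.pairwise_map]
  exact List.pairwise_lt_range.imp fun h => by simpa [← PNat.coe_lt_coe] using h

theorem linearIndependent_MwE (k : Type*) [CommRing k] :
    LinearIndependent k (fun w : {w : List (Fin m → E) // ∀ c ∈ w, c ≠ 0} => MwE k m w.1) := by
  let Φ : (((Fin m × ℕ+) →₀ E) → k) →ₗ[k] ({w : List (Fin m → E) // ∀ c ∈ w, c ≠ 0} → k) :=
    LinearMap.pi fun w => LinearMap.proj (seqExpE m w.1 ((List.range w.1.length).map Nat.succPNat))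
  refine LinearIndependent.of_comp Φ ?_
  have hΦ : Φ ∘ (fun w => MwE k m w.1) = fun w => Pi.single w 1 := by
    funext w w'
    simp only [Φ, Function.comp_apply, LinearMap.pi_apply, LinearMap.proj_apply, MwE_apply]
    rw [placements_seqExpE_nonempty_iff w.2 w'.2 (pairwise_map_succPNat_range _) (by simp),
      Pi.single_apply]
    simp only [Subtype.ext_iff, eq_comm]
    congr
  rw [hΦ]
  exact Pi.linearIndependent_single_one _ k

end Placements

section Product

variable {E : Type*} [AddCommMonoid E] {m : ℕ}

def shufflePlacements (m : ℕ) (x y : List (Fin m → E)) (d : (Fin m × ℕ+) →₀ E) :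
    Set (List (Origin × ℕ+)) :=
  {l | l.map Prod.fst ∈ shufflePatterns x.length y.length ∧
    l.map Prod.snd ∈ placements m (mergeAlong (· + ·) (l.map Prod.fst) x y) d}

def placementPairs (m : ℕ) (x y : List (Fin m → E)) (d : (Fin m × ℕ+) →₀ E) :
    Set (List ℕ+ × List ℕ+) :=
  {q | ∃ d₁ d₂, d₁ + d₂ = d ∧ q.1 ∈ placements m x d₁ ∧ q.2 ∈ placements m y d₂}

theorem ncard_shufflePlacements (x y : List (Fin m → E)) (d : (Fin m × ℕ+) →₀ E) :
    (shufflePlacements m x y d).ncard = (placementPairs m x y d).ncard := by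
  refine Set.ncard_congr (fun l _ => (leftIndices l, rightIndices l)) ?_ ?_ ?_
  · rintro l ⟨hs, -, hl, hd⟩
    obtain ⟨hx, hy⟩ := map_fst_mem_shufflePatterns_iff.1 hs
    exact ⟨_, _, (seqExpE_mergeAlong hx hy).symm.trans hd,
      ⟨hx, hl.sublist (leftIndices_sublist l), rfl⟩, ⟨hy, hl.sublist (rightIndices_sublist l), rfl⟩⟩
  · rintro l l' ⟨-, -, hl, -⟩ ⟨-, -, hl', -⟩ h
    rw [← mergeWithOrigin_leftIndices_rightIndices hl,
      ← mergeWithOrigin_leftIndices_rightIndices hl']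
    simp_all
  · rintro ⟨j, j'⟩ ⟨d₁, d₂, hd, ⟨hx, hj, rfl⟩, ⟨hy, hj', rfl⟩⟩
    have hs : (mergeWithOrigin j j').map Prod.fst ∈ shufflePatterns x.length y.length := by
      simp [map_fst_mem_shufflePatterns_iff, hx, hy]
    refine ⟨mergeWithOrigin j j', ⟨hs, ?_, pairwise_mergeWithOrigin hj hj', ?_⟩, ?_⟩
    · simp [length_mergeAlong _ hs]
    · rw [seqExpE_mergeAlong] <;> simp [*]
    · simp

variable (hsub : ∀ a b : E, a ≠ 0 → b ≠ 0 → a + b ≠ 0)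
include hsub

lemma eq_zero_and_eq_zero_of_add_eq_zero {a b : E} (h : a + b = 0) : a = 0 ∧ b = 0 := by
  by_cases ha : a = 0
  · exact ⟨ha, by simpa [ha] using h⟩
  · by_cases hb : b = 0
    · exact absurd (by simpa [hb] using h) ha
    · exact absurd h (hsub a b ha hb)

lemma add_ne_zero_of_left_ne_zero {ι : Type*} {a : ι → E} (b : ι → E) (ha : a ≠ 0) : a + b ≠ 0 := by
  obtain ⟨i, hi⟩ := Function.ne_iff.1 ha
  exact fun h => hi (eq_zero_and_eq_zero_of_add_eq_zero hsub (congrFun h i)).1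

lemma mergeAlong_ne_zero {x y : List (Fin m → E)} (hx : ∀ a ∈ x, a ≠ 0) (hy : ∀ b ∈ y, b ≠ 0)
    (s : List Origin) : ∀ c ∈ mergeAlong (· + ·) s x y, c ≠ 0 :=
  forall_mem_mergeAlong _ (fun _ b ha _ => add_ne_zero_of_left_ne_zero hsub b ha) s hx hy

/-- Each pattern carries at most one placement, since its quasi-shuffle has nonzero letters. -/
theorem card_filter_shufflePatterns {x y : List (Fin m → E)} (hx : ∀ a ∈ x, a ≠ 0)
    (hy : ∀ b ∈ y, b ≠ 0) (d : (Fin m × ℕ+) →₀ E) :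
    ((shufflePatterns x.length y.length).filter
        fun s => (placements m (mergeAlong (· + ·) s x y) d).Nonempty).card =
      (shufflePlacements m x y d).ncard := by
  have hinj : Set.InjOn (fun l => l.map Prod.fst) (shufflePlacements m x y d) := by
    rintro l ⟨-, hl⟩ l' ⟨-, hl'⟩ (h : l.map Prod.fst = l'.map Prod.fst)
    rw [← h] at hl'
    have := placements_subsingleton (mergeAlong_ne_zero hsub hx hy _) d hl hl'
    rw [← List.zip_unzip l, ← List.zip_unzip l']
    simp [h, this]
  rw [← Set.ncard_coe_finset, ← hinj.ncard_image, Finset.coe_filter]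
  congr 1
  ext s
  refine ⟨fun ⟨hs, j, hj⟩ => ?_, fun ⟨l, hl, hs⟩ => hs ▸ ⟨hl.1, _, hl.2⟩⟩
  have hlen : j.length = s.length := hj.1.trans (length_mergeAlong _ hs)
  have hfst : (s.zip j).map Prod.fst = s := List.map_fst_zip hlen.ge
  have hsnd : (s.zip j).map Prod.snd = j := List.map_snd_zip hlen.le
  exact ⟨s.zip j, ⟨by rwa [hfst], by rwa [hfst, hsnd]⟩, hfst⟩

theorem qsh_sum_MwE_apply (k : Type*) [CommRing k] {x y : List (Fin m → E)}
    (hx : ∀ a ∈ x, a ≠ 0) (hy : ∀ b ∈ y, b ≠ 0) (d : (Fin m × ℕ+) →₀ E) :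
    ((qsh (k := k) (· + ·) x y).sum fun z c => c • MwE k m z) d =
      ((placementPairs m x y d).ncard : k) := by
  rw [qsh_sum_smul_eq_sum, Finset.sum_apply]
  simp only [MwE_apply]
  rw [Finset.sum_boole, card_filter_shufflePatterns hsub hx hy, ncard_shufflePlacements]

lemma finite_setOf_add_eq (hfin : ∀ e : E, {p : E × E | p.1 + p.2 = e}.Finite) {α : Type*}
    (d : α →₀ E) : {p : (α →₀ E) × (α →₀ E) | p.1 + p.2 = d}.Finite := by
  let restrict : (α →₀ E) × (α →₀ E) → (d.support → E × E) := fun p i => (p.1 i, p.2 i)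
  have hmaps : restrict '' {p | p.1 + p.2 = d} ⊆
      Set.univ.pi fun i : d.support => {q : E × E | q.1 + q.2 = d i} := by
    rintro _ ⟨p, hp, rfl⟩ i -
    exact congrArg (· i) hp
  refine ((Set.Finite.pi fun _ => hfin _).subset hmaps).of_finite_image fun p hp p' hp' h => ?_
  have hcoord : ∀ i, p.1 i = p'.1 i ∧ p.2 i = p'.2 i := fun i => by
    by_cases hi : i ∈ d.support
    · exact Prod.ext_iff.1 (congrFun h ⟨i, hi⟩)
    · have hdi : d i = 0 := Finsupp.notMem_support_iff.1 hi
      have hpi := (eq_zero_and_eq_zero_of_add_eq_zero hsub) (congrArg (· i) hp |>.trans hdi)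
      have hpi' := (eq_zero_and_eq_zero_of_add_eq_zero hsub) (congrArg (· i) hp' |>.trans hdi)
      exact ⟨hpi.1.trans hpi'.1.symm, hpi.2.trans hpi'.2.symm⟩
  exact Prod.ext (Finsupp.ext fun i => (hcoord i).1) (Finsupp.ext fun i => (hcoord i).2)

lemma mulE_apply_eq_sum {k : Type*} [CommRing k]
    (hfin : ∀ e : E, {p : E × E | p.1 + p.2 = e}.Finite)
    (f g : ((Fin m × ℕ+) →₀ E) → k) (d : (Fin m × ℕ+) →₀ E) :
    mulE m f g d = ∑ p ∈ (finite_setOf_add_eq hsub hfin d).toFinset, f p.1 * g p.2 :=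
  finsum_mem_eq_finite_toFinset_sum _ _

theorem mulE_MwE_apply (k : Type*) [CommRing k]
    (hfin : ∀ e : E, {p : E × E | p.1 + p.2 = e}.Finite) {x y : List (Fin m → E)}
    (hx : ∀ a ∈ x, a ≠ 0) (hy : ∀ b ∈ y, b ≠ 0) (d : (Fin m × ℕ+) →₀ E) :
    mulE m (MwE k m x) (MwE k m y) d = ((placementPairs m x y d).ncard : k) := by
  have hinj : Set.InjOn (fun q => (seqExpE m x q.1, seqExpE m y q.2)) (placementPairs m x y d) := by
    rintro ⟨j₁, j₂⟩ ⟨_, _, -, h₁, h₂⟩ ⟨j₁', j₂'⟩ ⟨_, _, -, h₁', h₂'⟩ h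
    obtain ⟨e₁, e₂⟩ := Prod.ext_iff.1 h
    exact Prod.ext (placements_subsingleton hx _ ⟨h₁.1, h₁.2.1, rfl⟩ ⟨h₁'.1, h₁'.2.1, e₁.symm⟩)
      (placements_subsingleton hy _ ⟨h₂.1, h₂.2.1, rfl⟩ ⟨h₂'.1, h₂'.2.1, e₂.symm⟩)
  rw [mulE_apply_eq_sum hsub hfin]
  simp only [MwE_apply, ite_zero_mul_ite_zero, one_mul]
  rw [Finset.sum_boole, ← Set.ncard_coe_finset, Finset.coe_filter, ← hinj.ncard_image]
  congr 2
  ext ⟨d₁, d₂⟩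
  simp only [Set.Finite.mem_toFinset, Set.mem_ofPred_eq, Set.mem_image]
  constructor
  · rintro ⟨hd, ⟨j₁, hj₁⟩, ⟨j₂, hj₂⟩⟩
    exact ⟨(j₁, j₂), ⟨d₁, d₂, hd, hj₁, hj₂⟩, Prod.ext hj₁.2.2 hj₂.2.2⟩
  · rintro ⟨q, ⟨e₁, e₂, rfl, h₁, h₂⟩, h⟩
    obtain ⟨rfl, rfl⟩ := Prod.ext_iff.1 h
    rw [h₁.2.2, h₂.2.2]
    exact ⟨rfl, ⟨_, h₁⟩, ⟨_, h₂⟩⟩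

theorem qsh_sum_MwE_eq_mulE (k : Type*) [CommRing k]
    (hfin : ∀ e : E, {p : E × E | p.1 + p.2 = e}.Finite) {x y : List (Fin m → E)}
    (hx : ∀ a ∈ x, a ≠ 0) (hy : ∀ b ∈ y, b ≠ 0) :
    ((qsh (k := k) (· + ·) x y).sum fun z c => c • MwE k m z) = mulE m (MwE k m x) (MwE k m y) :=
  funext fun d => by rw [qsh_sum_MwE_apply hsub k hx hy, mulE_MwE_apply hsub k hfin hx hy]

noncomputable def mulEBilin (k : Type*) [CommRing k]
    (hfin : ∀ e : E, {p : E × E | p.1 + p.2 = e}.Finite) :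
    (((Fin m × ℕ+) →₀ E) → k) →ₗ[k] (((Fin m × ℕ+) →₀ E) → k) →ₗ[k] ((Fin m × ℕ+) →₀ E) → k :=
  LinearMap.mk₂ k (mulE m)
    (fun f f' g => funext fun d => by
      simp only [mulE_apply_eq_sum hsub hfin, Pi.add_apply, add_mul, Finset.sum_add_distrib])
    (fun c f g => funext fun d => by
      simp only [mulE_apply_eq_sum hsub hfin, Pi.smul_apply, smul_eq_mul, Finset.mul_sum,
        mul_assoc])
    (fun f g g' => funext fun d => by
      simp only [mulE_apply_eq_sum hsub hfin, Pi.add_apply, mul_add, Finset.sum_add_distrib])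
    (fun c f g => funext fun d => by
      simp only [mulE_apply_eq_sum hsub hfin, Pi.smul_apply, smul_eq_mul, Finset.mul_sum,
        mul_left_comm])

theorem mulE_mem_span_MwE (k : Type*) [CommRing k]
    (hfin : ∀ e : E, {p : E × E | p.1 + p.2 = e}.Finite) {f g : ((Fin m × ℕ+) →₀ E) → k}
    (hf : f ∈ Submodule.span k
      (Set.range fun w : {w : List (Fin m → E) // ∀ c ∈ w, c ≠ 0} => MwE k m w.1))
    (hg : g ∈ Submodule.span k
      (Set.range fun w : {w : List (Fin m → E) // ∀ c ∈ w, c ≠ 0} => MwE k m w.1)) :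
    mulE m f g ∈ Submodule.span k
      (Set.range fun w : {w : List (Fin m → E) // ∀ c ∈ w, c ≠ 0} => MwE k m w.1) := by
  have hmem := Submodule.apply_mem_map₂ (mulEBilin hsub k hfin) hf hg
  rw [Submodule.map₂_span_span] at hmem
  refine Submodule.span_le.2 ?_ hmem
  rintro _ ⟨_, ⟨x, rfl⟩, _, ⟨y, rfl⟩, rfl⟩
  change mulE m (MwE k m x.1) (MwE k m y.1) ∈ _
  rw [← qsh_sum_MwE_eq_mulE hsub k hfin x.2 y.2, qsh_sum_smul_eq_sum]
  exact Submodule.sum_mem _ fun s _ =>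
    Submodule.subset_span ⟨⟨_, mergeAlong_ne_zero hsub x.2 y.2 s⟩, rfl⟩

end Product

/-- let `E` be a commutative additively finite monoid whose
nonzero elements form a subsemigroup.  The linear map `M` from the free module
on multi-compositions with exponents in `E` to `EQSym[m]`, `w ↦ M_w`, is a
bijection (the `M_w` are linearly independent) and transforms the quasi-shuffle
product into the product of power series; consequently the span `EQSym[m]` is a
subalgebra of `k[[X]]^E`. -/
theorem stmt10 (k : Type*) [CommRing k] {E : Type*} [AddCommMonoid E] (m : ℕ)
    (hfin : ∀ e : E, {p : E × E | p.1 + p.2 = e}.Finite)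
    (hsub : ∀ a b : E, a ≠ 0 → b ≠ 0 → a + b ≠ 0) :
    LinearIndependent k
        (fun w : {w : List (Fin m → E) // ∀ c ∈ w, c ≠ 0} => MwE k m w.1) ∧
      (∀ w₁ w₂ : List (Fin m → E), (∀ c ∈ w₁, c ≠ 0) → (∀ c ∈ w₂, c ≠ 0) →
        ((qsh (k := k) (· + ·) w₁ w₂).sum fun z cz => cz • MwE k m z) =
          mulE m (MwE k m w₁) (MwE k m w₂)) ∧
      (∀ f g : ((Fin m × ℕ+) →₀ E) → k,
        f ∈ Submodule.span k
          (Set.range fun w : {w : List (Fin m → E) // ∀ c ∈ w, c ≠ 0} => MwE k m w.1) →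
        g ∈ Submodule.span k
          (Set.range fun w : {w : List (Fin m → E) // ∀ c ∈ w, c ≠ 0} => MwE k m w.1) →
        mulE m f g ∈ Submodule.span k
          (Set.range fun w : {w : List (Fin m → E) // ∀ c ∈ w, c ≠ 0} => MwE k m w.1)) :=
  ⟨linearIndependent_MwE k, fun _ _ hx hy => qsh_sum_MwE_eq_mulE hsub k hfin hx hy,
    fun _ _ hf hg => mulE_mem_span_MwE hsub k hfin hf hg⟩
end

section
/- Let A be a commutative k-algebra, Ш_k(A) = A ⊗ QS(A) = ⊕_{n≥1} A^{⊗n} the tensor product algebra of A with the quasi-shuffle algebra QS(A), and P_A : Ш_k(A) → Ш_k(A), 𝐚 ↦ 1_A ⊗ 𝐚. Then P_A is a Rota-Baxter operator of weight 1 on Ш_k(A): P_A(x)◇P_A(y) = P_A(x◇P_A(y)) + P_A(P_A(x)◇y) + P_A(x◇y) for all x, y. -/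
open scoped TensorProduct

/-- let `A` be a commutative `k`-algebra and
`Ш_k(A) = A ⊗ QS(A) = ⊕_{n≥1} A^{⊗n}` the tensor product algebra of `A` with
the quasi-shuffle algebra `QS(A)` (`QS(A)` realized on the underlying module of
the tensor algebra, with quasi-shuffle product `mqs`; the product `◇` on
`A ⊗ QS(A)` is `(a⊗𝐚)◇(b⊗𝐛) = (ab)⊗(𝐚*𝐛)`).  Then the linear operator
`P_A : 𝐚 ↦ 1_A ⊗ 𝐚` is a Rota–Baxter operator of weight `1`:
`P(x)◇P(y) = P(x◇P(y)) + P(P(x)◇y) + P(x◇y)`. -/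
theorem stmt18 {k A : Type*} [CommRing k] [CommRing A] [Algebra k A] [Algebra ℚ k]
    (mqs : TensorAlgebra k A →ₗ[k] TensorAlgebra k A →ₗ[k] TensorAlgebra k A)
    (hleft : ∀ x : TensorAlgebra k A, mqs 1 x = x)
    (hright : ∀ x : TensorAlgebra k A, mqs x 1 = x)
    (hrec : ∀ (a b : A) (x y : TensorAlgebra k A),
      mqs (TensorAlgebra.ι k a * x) (TensorAlgebra.ι k b * y) =
        TensorAlgebra.ι k a * mqs x (TensorAlgebra.ι k b * y) +
          TensorAlgebra.ι k b * mqs (TensorAlgebra.ι k a * x) y +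
          TensorAlgebra.ι k (a * b) * mqs x y)
    (d : (A ⊗[k] TensorAlgebra k A) →ₗ[k]
          (A ⊗[k] TensorAlgebra k A) →ₗ[k] (A ⊗[k] TensorAlgebra k A))
    (hd : ∀ (a b : A) (x y : TensorAlgebra k A),
      d (a ⊗ₜ x) (b ⊗ₜ y) = (a * b) ⊗ₜ mqs x y)
    (P : (A ⊗[k] TensorAlgebra k A) →ₗ[k] (A ⊗[k] TensorAlgebra k A))
    (hP : ∀ (a : A) (x : TensorAlgebra k A),
      P (a ⊗ₜ x) = (1 : A) ⊗ₜ (TensorAlgebra.ι k a * x)) :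
    ∀ u v : A ⊗[k] TensorAlgebra k A,
      d (P u) (P v) = P (d u (P v)) + P (d (P u) v) + P (d u v) := by
  intro u v
  induction u using TensorProduct.induction_on with
  | zero => simp
  | add u₁ u₂ h1 h2 => simp [map_add, LinearMap.add_apply, h1, h2]; abel
  | tmul a x =>
    induction v using TensorProduct.induction_on with
    | zero => simp
    | add v₁ v₂ h1 h2 => simp [map_add, h1, h2]; abel
    | tmul b y =>
      rw [hP a x, hP b y, hd, hd, hd, hd, one_mul, mul_one, hP, hP, hP, one_mul b, hrec]
      rw [TensorProduct.tmul_add, TensorProduct.tmul_add]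
end

section
/- Let Y = {y_1,...,y_m} and define SMQSym := x_{[m]^ε,0} k[X_0] ⊗ WMQSym with basis M̄_{(w,𝐰)} = x_{w,0} M_𝐰, product M̄_{(u_0,𝐰_1)} M̄_{(v_0,𝐰_2)} = M̄_{(u_0·v_0, 𝐰_1 * 𝐰_2)}, and linear operator P(M̄_{(w,𝐰)}) = M̄_{([m]^ε, w, 𝐰)}. Then (SMQSym, P), with the embedding y_i ↦ x_{1,0}^ε...x_{i-1,0}^ε x_{i,0} x_{i+1,0}^ε...x_{m,0}^ε, is the free commutative Rota-Baxter algebra of weight 1 on Y; equivalently, the map M̄_{(w_0,w_1,...,w_n)} ↦ θ(w_0)⊗θ(w_1)⊗...⊗θ(w_n) is an isomorphism of Rota-Baxter algebras onto (Ш_k(k[Y]), ◇, P_{k[Y]}). -/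
open scoped TensorProduct

/-- `Ñ = ℕ ⊔ {ε}` modelled as `Option ℕ` (`none = ε`), with its addition. -/
def nadd : Option ℕ → Option ℕ → Option ℕ
  | none, none => none
  | none, some n => if n = 0 then none else some n
  | some n, none => if n = 0 then none else some n
  | some a, some b => some (a + b)

/-- `θ` applied to a column: the monomial `y_1^{θ(w(1))} ⋯ y_m^{θ(w(m))}` in
`k[Y] = k[y_1,…,y_m]`, where `θ(ε) = 0`. -/
noncomputable def thetaPoly (k : Type*) [CommRing k] (m : ℕ)
    (c : Fin m → Option ℕ) : MvPolynomial (Fin m) k :=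
  ∏ i : Fin m, MvPolynomial.X i ^ (c i).getD 0

/-- The pure tensor `θ(w_1) ⊗ ⋯ ⊗ θ(w_n)` in `QS(k[Y])`. -/
noncomputable def ptTheta (k : Type*) [CommRing k] (m : ℕ)
    (w : List (Fin m → Option ℕ)) : TensorAlgebra k (MvPolynomial (Fin m) k) :=
  (w.map fun c => TensorAlgebra.ι k (thetaPoly k m c)).prod

/-- The index set of the basis `M̄_{(w_0, w_1, …, w_n)}` of `SMQSym`:
pairs `(w_0, 𝐰)` of a column `w_0 : [m] → P̃` and a weak multi-composition
`𝐰` (all columns taking values in `P̃ = P ⊔ {ε}`, i.e. never `0`). -/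
def SIdx (m : ℕ) : Type :=
  {p : (Fin m → Option ℕ) × List (Fin m → Option ℕ) //
    (∀ i, p.1 i ≠ some 0) ∧ ∀ c ∈ p.2, ∀ i, c i ≠ some 0}

/-- The linear map `M̄_{(w_0,w_1,…,w_n)} ↦ θ(w_0) ⊗ θ(w_1) ⊗ ⋯ ⊗ θ(w_n)` from
`SMQSym` (the free module on `SIdx`) to `Ш_k(k[Y]) = k[Y] ⊗ QS(k[Y])`. -/
noncomputable def Psi (k : Type*) [CommRing k] (m : ℕ) (f : SIdx m →₀ k) :
    MvPolynomial (Fin m) k ⊗[k] TensorAlgebra k (MvPolynomial (Fin m) k) :=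
  f.sum fun p c => c • (thetaPoly k m p.1.1 ⊗ₜ ptTheta k m p.1.2)

/-
A column `c : [m] → P̃` corresponds to the exponent vector `i ↦ θ(c i)`, and
this is a bijection because columns never take the value `0`. Hence `Ψ` sends the basis
`M̄_{(w_0, 𝐰)}` of `SMQSym` bijectively onto the tensor product of the monomial basis of
`k[Y]` with the induced word basis of `QS(k[Y])`, so it is a linear isomorphism. Since `θ`
turns the pointwise addition of columns into the product of monomials, the recursion
defining `qsh` is mapped term by term onto the recursion of the quasi-shuffle product of
`QS(k[Y])`, which gives compatibility with the products; compatibility with the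
Rota–Baxter operators is immediate from `θ([m]^ε) = 1`.
-/

lemma getD_nadd (a b : Option ℕ) : (nadd a b).getD 0 = a.getD 0 + b.getD 0 := by
  rcases a with _ | a <;> rcases b with _ | b <;> simp [nadd] <;> split <;> simp_all

theorem FreeAlgebra.basisFreeMonoid_apply (R X : Type*) [CommSemiring R] (w : FreeMonoid X) :
    FreeAlgebra.basisFreeMonoid R X w = FreeMonoid.lift (FreeAlgebra.ι R) w := by
  simp [FreeAlgebra.basisFreeMonoid, FreeAlgebra.equivMonoidAlgebraFreeMonoid]

theorem Module.Basis.tensorAlgebra_apply {κ R M : Type*} [CommSemiring R] [AddCommMonoid M]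
    [Module R M] (b : Module.Basis κ R M) (w : FreeMonoid κ) :
    b.tensorAlgebra w = FreeMonoid.lift (fun i => TensorAlgebra.ι R (b i)) w := by
  rw [Module.Basis.tensorAlgebra, Module.Basis.map_apply, FreeAlgebra.basisFreeMonoid_apply]
  show ((TensorAlgebra.equivFreeAlgebra b).symm : FreeAlgebra R κ →* TensorAlgebra R M).comp
    (FreeMonoid.lift (FreeAlgebra.ι R)) w = _
  simp [FreeMonoid.comp_lift, Function.comp_def]

section QuasiShuffle

variable (k : Type*) {M C : Type*} [CommRing k] [Semiring M] [Algebra k M]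

noncomputable def wordTensor (f : C → M) (w : List C) : TensorAlgebra k M :=
  (w.map fun c => TensorAlgebra.ι k (f c)).prod

variable {k}

@[simp]
lemma wordTensor_nil (f : C → M) : wordTensor k f [] = 1 := rfl

@[simp]
lemma wordTensor_cons (f : C → M) (a : C) (w : List C) :
    wordTensor k f (a :: w) = TensorAlgebra.ι k (f a) * wordTensor k f w := by
  simp [wordTensor]

lemma linearCombination_wordTensor_mapDomain_cons (f : C → M) (a : C) (x : List C →₀ k) :
    Finsupp.linearCombination k (wordTensor k f) (x.mapDomain (a :: ·)) =
      TensorAlgebra.ι k (f a) * Finsupp.linearCombination k (wordTensor k f) x := by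
  rw [Finsupp.linearCombination_mapDomain, Finsupp.linearCombination_apply,
    Finsupp.linearCombination_apply, Finsupp.mul_sum]
  simp

theorem quasiShuffle_wordTensor
    (mqs : TensorAlgebra k M →ₗ[k] TensorAlgebra k M →ₗ[k] TensorAlgebra k M)
    (hleft : ∀ x, mqs 1 x = x) (hright : ∀ x, mqs x 1 = x)
    (hrec : ∀ (a b : M) (x y : TensorAlgebra k M),
      mqs (TensorAlgebra.ι k a * x) (TensorAlgebra.ι k b * y) =
        TensorAlgebra.ι k a * mqs x (TensorAlgebra.ι k b * y) +
          TensorAlgebra.ι k b * mqs (TensorAlgebra.ι k a * x) y +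
          TensorAlgebra.ι k (a * b) * mqs x y)
    {op : C → C → C} {f : C → M} (hf : ∀ a b, f (op a b) = f a * f b) (x y : List C) :
    mqs (wordTensor k f x) (wordTensor k f y) =
      Finsupp.linearCombination k (wordTensor k f) (qsh (k := k) op x y) := by
  induction x, y using qsh.induct with
  | case1 y => simp [hleft, qsh]
  | case2 x hx =>
    obtain - | ⟨a, x⟩ := x
    · exact absurd rfl hx
    · simp [hright, qsh]
  | case3 a x b y ih₁ ih₂ ih₃ =>
    rw [wordTensor_cons, wordTensor_cons, hrec, qsh, map_add, map_add,
      linearCombination_wordTensor_mapDomain_cons, linearCombination_wordTensor_mapDomain_cons,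
      linearCombination_wordTensor_mapDomain_cons, ← ih₁, ← ih₂, ← ih₃, ← wordTensor_cons,
      ← wordTensor_cons, hf]

end QuasiShuffle

section Columns

variable {m : ℕ}

/-- The exponent vector `i ↦ θ(c i)` of a column. -/
noncomputable def colToExp (c : Fin m → Option ℕ) : Fin m →₀ ℕ :=
  Finsupp.equivFunOnFinite.symm fun i => (c i).getD 0

def expToCol (e : Fin m →₀ ℕ) : Fin m → Option ℕ :=
  fun i => if e i = 0 then none else some (e i)

lemma colToExp_apply (c : Fin m → Option ℕ) (i : Fin m) : colToExp c i = (c i).getD 0 := rfl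

lemma expToCol_ne_some_zero (e : Fin m →₀ ℕ) (i : Fin m) : expToCol e i ≠ some 0 := by
  unfold expToCol
  split <;> simp_all

lemma expToCol_colToExp {c : Fin m → Option ℕ} (h : ∀ i, c i ≠ some 0) :
    expToCol (colToExp c) = c := by
  funext i
  rw [expToCol, colToExp_apply]
  cases hc : c i with
  | none => simp
  | some n =>
    have hn : n ≠ 0 := by rintro rfl; exact h i hc
    simp [hn]

lemma colToExp_expToCol (e : Fin m →₀ ℕ) : colToExp (expToCol e) = e := by
  ext i
  rw [colToExp_apply, expToCol]
  split <;> simp_all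

lemma map_expToCol_map_colToExp {w : List (Fin m → Option ℕ)} (h : ∀ c ∈ w, ∀ i, c i ≠ some 0) :
    (w.map colToExp).map expToCol = w := by
  rw [List.map_map]
  exact (List.map_congr_left fun c hc => expToCol_colToExp (h c hc)).trans (List.map_id w)

lemma map_colToExp_map_expToCol (l : List (Fin m →₀ ℕ)) :
    (l.map expToCol).map colToExp = l := by
  rw [List.map_map]
  exact (List.map_congr_left fun e _ => colToExp_expToCol e).trans (List.map_id l)

noncomputable def SIdx.equiv (m : ℕ) : SIdx m ≃ (Fin m →₀ ℕ) × FreeMonoid (Fin m →₀ ℕ) where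
  toFun p := (colToExp p.1.1, FreeMonoid.ofList (p.1.2.map colToExp))
  invFun q := ⟨(expToCol q.1, q.2.toList.map expToCol),
    fun i => expToCol_ne_some_zero q.1 i, by
      simp only [List.mem_map]
      rintro _ ⟨e, -, rfl⟩ i
      exact expToCol_ne_some_zero e i⟩
  left_inv := fun ⟨⟨c, w⟩, hc, hw⟩ =>
    Subtype.ext (Prod.ext (expToCol_colToExp hc) (map_expToCol_map_colToExp hw))
  right_inv := fun ⟨e, l⟩ => Prod.ext (colToExp_expToCol e) (map_colToExp_map_expToCol l)

end Columns

section Basis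

variable {k : Type*} [CommRing k] {m : ℕ}

lemma thetaPoly_nadd (u v : Fin m → Option ℕ) :
    thetaPoly k m (fun i => nadd (u i) (v i)) = thetaPoly k m u * thetaPoly k m v := by
  simp [thetaPoly, getD_nadd, pow_add, Finset.prod_mul_distrib]

lemma thetaPoly_const_none : thetaPoly k m (fun _ => none) = 1 := by
  simp [thetaPoly]

lemma thetaPoly_indicator (i : Fin m) :
    thetaPoly k m (fun j => if j = i then some 1 else none) = MvPolynomial.X i := by
  rw [thetaPoly, Finset.prod_eq_single i (fun j _ hj => by simp [hj]) (by simp)]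
  simp

lemma ptTheta_eq_wordTensor : ptTheta k m = wordTensor k (thetaPoly k m) := rfl

lemma thetaPoly_eq_basisMonomials (c : Fin m → Option ℕ) :
    thetaPoly k m c = MvPolynomial.basisMonomials (Fin m) k (colToExp c) := by
  rw [MvPolynomial.coe_basisMonomials]
  show _ = MvPolynomial.monomial (colToExp c) (1 : k)
  rw [MvPolynomial.monomial_eq, map_one, one_mul, Finsupp.prod_pow]
  rfl

lemma ptTheta_eq_tensorAlgebra_basisMonomials (w : List (Fin m → Option ℕ)) :
    ptTheta k m w = (MvPolynomial.basisMonomials (Fin m) k).tensorAlgebra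
      (FreeMonoid.ofList (w.map colToExp)) := by
  rw [Module.Basis.tensorAlgebra_apply, FreeMonoid.lift_ofList, List.map_map, ptTheta]
  simp only [Function.comp_def, ← thetaPoly_eq_basisMonomials]

variable (k m) in
noncomputable def shuffleBasis :
    Module.Basis (SIdx m) k
      (MvPolynomial (Fin m) k ⊗[k] TensorAlgebra k (MvPolynomial (Fin m) k)) :=
  ((MvPolynomial.basisMonomials (Fin m) k).tensorProduct
    (MvPolynomial.basisMonomials (Fin m) k).tensorAlgebra).reindex (SIdx.equiv m).symm

lemma shuffleBasis_apply (p : SIdx m) :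
    shuffleBasis k m p = thetaPoly k m p.1.1 ⊗ₜ ptTheta k m p.1.2 := by
  rw [shuffleBasis, Module.Basis.reindex_apply, Equiv.symm_symm,
    Module.Basis.tensorProduct_apply', thetaPoly_eq_basisMonomials,
    ptTheta_eq_tensorAlgebra_basisMonomials]
  rfl

lemma Psi_eq_shuffleBasis_repr_symm : Psi k m = (shuffleBasis k m).repr.symm := by
  funext f
  rw [Module.Basis.repr_symm_apply, Finsupp.linearCombination_apply, Psi]
  simp only [shuffleBasis_apply]

lemma Psi_single (p : SIdx m) :
    Psi k m (Finsupp.single p 1) = thetaPoly k m p.1.1 ⊗ₜ ptTheta k m p.1.2 := by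
  rw [Psi, Finsupp.sum_single_index (by simp), one_smul]

end Basis

/-- `(SMQSym, P)`, with basis `M̄_{(w_0,𝐰)}`, product
`M̄_{(u_0,𝐰_1)} M̄_{(v_0,𝐰_2)} = M̄_{(u_0·v_0, 𝐰_1 * 𝐰_2)}`, the operator
`P(M̄_{(w,𝐰)}) = M̄_{([m]^ε, w, 𝐰)}` and the embedding
`y_i ↦ x_{1,0}^ε ⋯ x_{i,0} ⋯ x_{m,0}^ε`, is the free commutative Rota–Baxter
algebra of weight `1` on `Y = {y_1,…,y_m}`: equivalently, the map
`M̄_{(w_0,w_1,…,w_n)} ↦ θ(w_0) ⊗ θ(w_1) ⊗ ⋯ ⊗ θ(w_n)` is an isomorphism of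
Rota–Baxter algebras onto `(Ш_k(k[Y]), ◇, P_{k[Y]})`. -/
theorem stmt19 (k : Type*) [CommRing k] (m : ℕ)
    -- the quasi-shuffle product on QS(k[Y])
    (mqs : TensorAlgebra k (MvPolynomial (Fin m) k) →ₗ[k]
      TensorAlgebra k (MvPolynomial (Fin m) k) →ₗ[k]
        TensorAlgebra k (MvPolynomial (Fin m) k))
    (hleft : ∀ x, mqs 1 x = x) (hright : ∀ x, mqs x 1 = x)
    (hrec : ∀ (a b : MvPolynomial (Fin m) k)
        (x y : TensorAlgebra k (MvPolynomial (Fin m) k)),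
      mqs (TensorAlgebra.ι k a * x) (TensorAlgebra.ι k b * y) =
        TensorAlgebra.ι k a * mqs x (TensorAlgebra.ι k b * y) +
          TensorAlgebra.ι k b * mqs (TensorAlgebra.ι k a * x) y +
          TensorAlgebra.ι k (a * b) * mqs x y)
    -- the product ◇ of Ш_k(k[Y]) = k[Y] ⊗ QS(k[Y])
    (d : (MvPolynomial (Fin m) k ⊗[k] TensorAlgebra k (MvPolynomial (Fin m) k)) →ₗ[k]
      (MvPolynomial (Fin m) k ⊗[k] TensorAlgebra k (MvPolynomial (Fin m) k)) →ₗ[k]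
        (MvPolynomial (Fin m) k ⊗[k] TensorAlgebra k (MvPolynomial (Fin m) k)))
    (hd : ∀ (a b : MvPolynomial (Fin m) k)
        (x y : TensorAlgebra k (MvPolynomial (Fin m) k)),
      d (a ⊗ₜ x) (b ⊗ₜ y) = (a * b) ⊗ₜ mqs x y)
    -- the Rota-Baxter operator P_{k[Y]} : 𝐚 ↦ 1 ⊗ 𝐚 of Ш_k(k[Y])
    (P : (MvPolynomial (Fin m) k ⊗[k] TensorAlgebra k (MvPolynomial (Fin m) k)) →ₗ[k]
      (MvPolynomial (Fin m) k ⊗[k] TensorAlgebra k (MvPolynomial (Fin m) k)))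
    (hP : ∀ (a : MvPolynomial (Fin m) k)
        (x : TensorAlgebra k (MvPolynomial (Fin m) k)),
      P (a ⊗ₜ x) = (1 : MvPolynomial (Fin m) k) ⊗ₜ (TensorAlgebra.ι k a * x)) :
    -- Ψ is a linear bijection
    Function.Bijective (Psi k m) ∧
    -- Ψ transforms the product of SMQSym into ◇
    (∀ p q : SIdx m,
      d (Psi k m (Finsupp.single p 1)) (Psi k m (Finsupp.single q 1)) =
        (qsh (k := k) (fun a b i => nadd (a i) (b i)) p.1.2 q.1.2).sum
          fun z c => c • (thetaPoly k m (fun i => nadd (p.1.1 i) (q.1.1 i)) ⊗ₜ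
            ptTheta k m z)) ∧
    -- Ψ intertwines the Rota-Baxter operators
    (∀ p : SIdx m,
      P (Psi k m (Finsupp.single p 1)) =
        thetaPoly k m (fun _ => (none : Option ℕ)) ⊗ₜ
          ptTheta k m (p.1.1 :: p.1.2)) ∧
    -- the embedding of Y
    (∀ i : Fin m,
      Psi k m (Finsupp.single
        ⟨((fun j => if j = i then some 1 else none), []),
          ⟨fun j => by dsimp only; split <;> simp, fun c hc => absurd hc List.not_mem_nil⟩⟩ 1) =
        (MvPolynomial.X i : MvPolynomial (Fin m) k) ⊗ₜ 1) := by
  refine ⟨?_, fun p q => ?_, fun p => ?_, fun i => ?_⟩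
  · rw [Psi_eq_shuffleBasis_repr_symm]
    exact (shuffleBasis k m).repr.symm.bijective
  · rw [Psi_single, Psi_single, hd, ptTheta_eq_wordTensor,
      quasiShuffle_wordTensor mqs hleft hright hrec thetaPoly_nadd,
      Finsupp.linearCombination_apply, Finsupp.sum, TensorProduct.tmul_sum, Finsupp.sum,
      thetaPoly_nadd]
    simp only [TensorProduct.tmul_smul]
  · rw [Psi_single, hP, thetaPoly_const_none, ptTheta_eq_wordTensor, wordTensor_cons]
  · exact (Psi_single _).trans (congrArg (· ⊗ₜ 1) (thetaPoly_indicator i))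
end
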